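/- arXiv:2505.12922 — 4 statements merged into one kernel-verified Lean document; each statement's English description precedes it below -/
import Mathlib

section
/- Let α ∈ Aut(F) be an IA-automorphism for which there is a basis B = U ⊔ X ⊔ ⊔_{x∈X} Y_x of F such that αu = u for all u ∈ U, αx = x for all x ∈ X, and αy = x y x⁻¹ for all y ∈ Y_x (x ∈ X). Then α is a product of two symmetries of Aut(F). -/
open Pointwise

/-- A subset `S` of a free group is a basis if the canonical homomorphism
`FreeGroup S →* FreeGroup X` extending the inclusion is bijective. -/
def FreeGroup.IsBasis {X : Type*} (S : Set (FreeGroup X)) : Prop :=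
  Function.Bijective (FreeGroup.lift (fun s : S => (s : FreeGroup X)))

/-- The subgroup of inner automorphisms of a group `G`, as a subgroup of `MulAut G`. -/
def Inn (G : Type*) [Group G] : Subgroup (MulAut G) :=
  (MulAut.conj : G →* MulAut G).range

instance Inn.normal (G : Type*) [Group G] : (Inn G).Normal := by
  constructor
  rintro - ⟨g, rfl⟩ σ
  refine ⟨σ g, ?_⟩
  ext x
  simp [MulAut.conj, MulAut.mul_apply, mul_assoc]

/-- The outer automorphism group `Out G = Aut G / Inn G`. -/
abbrev OutAut (G : Type*) [Group G] := MulAut G ⧸ Inn G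

/-- The natural homomorphism `Aut G → Out G`. -/
def toOut {G : Type*} [Group G] : MulAut G →* OutAut G :=
  QuotientGroup.mk' (Inn G)

/-- `g` is an involution of the group `G`. -/
def IsInvolution {G : Type*} [Group G] (g : G) : Prop :=
  g ≠ 1 ∧ g ^ 2 = 1

/-- A subset of a group is anti-commutative if its elements pairwise do not commute. -/
def AntiCommSet {G : Type*} [Group G] (s : Set G) : Prop :=
  ∀ a ∈ s, ∀ b ∈ s, a ≠ b → a * b ≠ b * a

/-- A decomposition `U ⊔ S ⊔ ⊔_{x ∈ S} Y x` of a basis of a free group. -/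
structure IsBasisDecomposition {X : Type*} (U S : Set (FreeGroup X))
    (Y : FreeGroup X → Set (FreeGroup X)) : Prop where
  isBasis : FreeGroup.IsBasis (U ∪ S ∪ ⋃ x ∈ S, Y x)
  disjUS : Disjoint U S
  disjUY : ∀ x ∈ S, Disjoint U (Y x)
  disjSY : ∀ x ∈ S, Disjoint S (Y x)
  disjYY : ∀ x ∈ S, ∀ x' ∈ S, x ≠ x' → Disjoint (Y x) (Y x')

/-- `U ⊔ S ⊔ ⊔_{x ∈ S} Y x` is a canonical basis for the (soft) involution `φ`:
`φ` fixes `U` pointwise, inverts the elements of `S` and conjugates the elements of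
`Y x` by `x`. -/
def IsCanonicalBasis {X : Type*} (φ : MulAut (FreeGroup X)) (U S : Set (FreeGroup X))
    (Y : FreeGroup X → Set (FreeGroup X)) : Prop :=
  IsBasisDecomposition U S Y ∧
    (∀ u ∈ U, φ u = u) ∧ (∀ x ∈ S, φ x = x⁻¹) ∧
    (∀ x ∈ S, ∀ y ∈ Y x, φ y = x * y * x⁻¹)

/-- A soft involution of `Aut F`: an involution admitting a canonical basis. -/
def IsSoftInvolution {X : Type*} (φ : MulAut (FreeGroup X)) : Prop :=
  IsInvolution φ ∧ ∃ U S Y, IsCanonicalBasis φ U S Y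

/-- A soft involution of `Out F`: an involution induced by a soft involution of `Aut F`. -/
def IsSoftOutInvolution {X : Type*} (f : OutAut (FreeGroup X)) : Prop :=
  IsInvolution f ∧ ∃ φ, IsSoftInvolution φ ∧ toOut φ = f

/-- A `1`-involution of `Aut F`: a soft involution whose canonical bases have exactly
one block. -/
def IsOneInvolution {X : Type*} (ψ : MulAut (FreeGroup X)) : Prop :=
  IsInvolution ψ ∧ ∃ (U Y : Set (FreeGroup X)) (x : FreeGroup X),
    IsCanonicalBasis ψ U {x} (fun _ => Y)

/-- A `1`-involution of `Out F`: an involution induced by a `1`-involution of `Aut F`. -/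
def IsOneOutInvolution {X : Type*} (f : OutAut (FreeGroup X)) : Prop :=
  IsInvolution f ∧ ∃ ψ, IsOneInvolution ψ ∧ toOut ψ = f

/-- An extremal involution of `Aut F`: an involution inverting one element of a suitable
basis and fixing all other elements of that basis. -/
def IsExtremalInvolution {X : Type*} (φ : MulAut (FreeGroup X)) : Prop :=
  IsInvolution φ ∧ ∃ (B : Set (FreeGroup X)) (x : FreeGroup X),
    FreeGroup.IsBasis B ∧ x ∈ B ∧ φ x = x⁻¹ ∧ ∀ b ∈ B, b ≠ x → φ b = b

/-- An extremal involution of `Out F`: an involution induced by an extremal involution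
of `Aut F`. -/
def IsExtremalOutInvolution {X : Type*} (f : OutAut (FreeGroup X)) : Prop :=
  IsInvolution f ∧ ∃ φ, IsExtremalInvolution φ ∧ toOut φ = f

/-- A symmetry of `Aut F`: an involution inverting all elements of some basis. -/
def IsSymmetryAut {X : Type*} (θ : MulAut (FreeGroup X)) : Prop :=
  IsInvolution θ ∧ ∃ B : Set (FreeGroup X), FreeGroup.IsBasis B ∧ ∀ b ∈ B, θ b = b⁻¹

/-- A symmetry of `Out F`: an involution whose full preimage in `Aut F` contains a
symmetry. -/
def IsSymmetryOut {X : Type*} (f : OutAut (FreeGroup X)) : Prop :=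
  IsInvolution f ∧ ∃ θ, IsSymmetryAut θ ∧ toOut θ = f

/-- Condition (★): the product set `K·K` contains exactly one conjugacy class of
involutions, and no element of `K` is a square. -/
def StarCondition {G : Type*} [Group G] (K : Set G) : Prop :=
  (∃ c ∈ K * K, IsInvolution c ∧ ∀ d ∈ K * K, IsInvolution d → IsConj c d) ∧
    ∀ k ∈ K, ¬ ∃ g : G, g ^ 2 = k

namespace FGHelp

variable {X : Type*}

open FreeGroup

/-- The equivalence coming from a basis. -/
noncomputable def basisEquiv {B : Set (FreeGroup X)} (hB : FreeGroup.IsBasis B) :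
    FreeGroup B ≃* FreeGroup X :=
  MulEquiv.ofBijective (FreeGroup.lift (fun s : B => (s : FreeGroup X))) hB

lemma basisEquiv_of {B : Set (FreeGroup X)} (hB : FreeGroup.IsBasis B) (b : B) :
    basisEquiv hB (FreeGroup.of b) = (b : FreeGroup X) := by
  show FreeGroup.lift (fun s : B => (s : FreeGroup X)) (FreeGroup.of b) = _
  simp

lemma basisEquiv_symm {B : Set (FreeGroup X)} (hB : FreeGroup.IsBasis B) {b : FreeGroup X}
    (hb : b ∈ B) : (basisEquiv hB).symm b = FreeGroup.of (⟨b, hb⟩ : B) := by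
  apply (basisEquiv hB).injective
  rw [MulEquiv.apply_symm_apply, basisEquiv_of]

lemma hom_ext_of_basis {B : Set (FreeGroup X)} (hB : FreeGroup.IsBasis B)
    {G : Type*} [Group G] {f g : FreeGroup X →* G}
    (h : ∀ b ∈ B, f b = g b) : f = g := by
  have key : f.comp (basisEquiv hB).toMonoidHom = g.comp (basisEquiv hB).toMonoidHom :=
    FreeGroup.ext_hom _ _ (fun b => by simp [basisEquiv_of hB b, h b b.2])
  apply MonoidHom.ext
  intro w
  obtain ⟨v, rfl⟩ := (basisEquiv hB).surjective w
  exact DFunLike.congr_fun key v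

/-- Extend a function defined (at least) on a basis to an endomorphism. -/
noncomputable def extHom {B : Set (FreeGroup X)} (hB : FreeGroup.IsBasis B)
    (f : FreeGroup X → FreeGroup X) : FreeGroup X →* FreeGroup X :=
  (FreeGroup.lift (fun b : B => f b)).comp (basisEquiv hB).symm.toMonoidHom

lemma extHom_apply {B : Set (FreeGroup X)} (hB : FreeGroup.IsBasis B)
    (f : FreeGroup X → FreeGroup X) {b : FreeGroup X} (hb : b ∈ B) :
    extHom hB f b = f b := by
  simp [extHom, basisEquiv_symm hB hb]

/-- Build an automorphism from a pair of mutually inverse (on the basis) functions. -/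
noncomputable def mkAut {B : Set (FreeGroup X)} (hB : FreeGroup.IsBasis B)
    (f g : FreeGroup X → FreeGroup X)
    (hfg : ∀ b ∈ B, extHom hB g (f b) = b) (hgf : ∀ b ∈ B, extHom hB f (g b) = b) :
    MulAut (FreeGroup X) where
  toFun := extHom hB f
  invFun := extHom hB g
  left_inv := by
    intro w
    have key : (extHom hB g).comp (extHom hB f) = MonoidHom.id _ :=
      hom_ext_of_basis hB (fun b hb => by
        simp [MonoidHom.comp_apply, extHom_apply hB f hb, hfg b hb])
    exact DFunLike.congr_fun key w
  right_inv := by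
    intro w
    have key : (extHom hB f).comp (extHom hB g) = MonoidHom.id _ :=
      hom_ext_of_basis hB (fun b hb => by
        simp [MonoidHom.comp_apply, extHom_apply hB g hb, hgf b hb])
    exact DFunLike.congr_fun key w
  map_mul' := map_mul _

lemma mkAut_apply {B : Set (FreeGroup X)} (hB : FreeGroup.IsBasis B)
    (f g : FreeGroup X → FreeGroup X) (hfg) (hgf) {b : FreeGroup X} (hb : b ∈ B) :
    mkAut hB f g hfg hgf b = f b :=
  extHom_apply hB f hb

/-- The image of a basis under an automorphism is a basis. -/
lemma isBasis_image {B : Set (FreeGroup X)} (hB : FreeGroup.IsBasis B)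
    (σ : MulAut (FreeGroup X)) : FreeGroup.IsBasis ((σ : FreeGroup X → FreeGroup X) '' B) := by
  set e : B ≃ ((σ : FreeGroup X → FreeGroup X) '' B) := Equiv.Set.image _ B σ.injective with he
  have key : FreeGroup.lift (fun s : ((σ : FreeGroup X → FreeGroup X) '' B) => (s : FreeGroup X))
      = (σ.toMonoidHom.comp (basisEquiv hB).toMonoidHom).comp
          (freeGroupCongr e).symm.toMonoidHom := by
    apply FreeGroup.ext_hom
    intro b'
    have h1 : (freeGroupCongr e).symm (FreeGroup.of b') = FreeGroup.of (e.symm b') := by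
      simp [freeGroupCongr_symm]
    have h2 : σ ((e.symm b' : B) : FreeGroup X) = (b' : FreeGroup X) := by
      conv_rhs => rw [← e.apply_symm_apply b']
      rfl
    simp [h1, basisEquiv_of, h2]
  rw [FreeGroup.IsBasis, key]
  exact (σ.bijective.comp (basisEquiv hB).bijective).comp (freeGroupCongr e).symm.bijective

/-- A basis element is not equal to its own inverse. -/
lemma basis_ne_inv {B : Set (FreeGroup X)} (hB : FreeGroup.IsBasis B) {b : FreeGroup X}
    (hb : b ∈ B) : b⁻¹ ≠ b := by
  intro h
  set h1 : FreeGroup X →* Multiplicative ℤ :=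
    (FreeGroup.lift (fun _ : B => Multiplicative.ofAdd (1 : ℤ))).comp
      (basisEquiv hB).symm.toMonoidHom with hh1
  have hb1 : h1 b = Multiplicative.ofAdd (1 : ℤ) := by
    simp [hh1, basisEquiv_symm hB hb]
  have := congrArg h1 h
  rw [MonoidHom.map_inv, hb1] at this
  exact absurd (congrArg Multiplicative.toAdd this) (by decide)

lemma basis_ne_one {B : Set (FreeGroup X)} (hB : FreeGroup.IsBasis B) {b : FreeGroup X}
    (hb : b ∈ B) : b ≠ 1 := by
  intro h
  exact basis_ne_inv hB hb (by rw [h]; simp)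

/-- A basis of a free group on a nonempty type is nonempty. -/
lemma basis_nonempty [Nonempty X] {B : Set (FreeGroup X)} (hB : FreeGroup.IsBasis B) :
    B.Nonempty := by
  by_contra h
  rw [Set.not_nonempty_iff_eq_empty] at h
  have hE : IsEmpty B := by rw [h]; exact Set.isEmpty_coe_sort.mpr rfl
  obtain ⟨x₀⟩ := ‹Nonempty X›
  obtain ⟨w, hw⟩ := hB.2 (FreeGroup.of x₀)
  have : FreeGroup.lift (fun s : B => (s : FreeGroup X)) = 1 :=
    FreeGroup.ext_hom _ _ (fun b => hE.elim b)
  rw [this] at hw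
  exact FreeGroup.of_ne_one x₀ hw.symm



end FGHelp

/-- Every IA-automorphism `α` of `F` acting on a suitable basis `U ⊔ S ⊔ ⊔_{x ∈ S} Y x`
of `F` by `αu = u`, `αx = x` and `αy = x y x⁻¹` (for `u ∈ U`, `x ∈ S`, `y ∈ Y x`)
is a product of two symmetries of `Aut F`. -/
theorem ia_automorphism_product_of_two_symmetries (X : Type*) [Infinite X]
    (α : MulAut (FreeGroup X))
    (hIA : ∀ w : FreeGroup X, Abelianization.of (α w) = Abelianization.of w)
    (U S : Set (FreeGroup X)) (Y : FreeGroup X → Set (FreeGroup X))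
    (hdec : IsBasisDecomposition U S Y)
    (hU : ∀ u ∈ U, α u = u)
    (hS : ∀ x ∈ S, α x = x)
    (hY : ∀ x ∈ S, ∀ y ∈ Y x, α y = x * y * x⁻¹) :
    ∃ θ₁ θ₂ : MulAut (FreeGroup X), IsSymmetryAut θ₁ ∧ IsSymmetryAut θ₂ ∧ α = θ₁ * θ₂ := by
  classical
  have hB : FreeGroup.IsBasis (U ∪ S ∪ ⋃ x ∈ S, Y x) := hdec.isBasis
  set B : Set (FreeGroup X) := U ∪ S ∪ ⋃ x ∈ S, Y x with hBdef
  have hUB : U ⊆ B := fun u hu => Or.inl (Or.inl hu)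
  have hSB : S ⊆ B := fun x hx => Or.inl (Or.inr hx)
  have hYB : ∀ x ∈ S, Y x ⊆ B := fun x hx y hy => Or.inr (Set.mem_biUnion hx hy)
  -- θ₂ : inversion of the basis B
  have hinv : ∀ b ∈ B, FGHelp.extHom hB (fun w => w⁻¹) ((fun w => w⁻¹) b) = b := by
    intro b hb
    rw [show (fun w : FreeGroup X => w⁻¹) b = b⁻¹ from rfl, MonoidHom.map_inv,
      FGHelp.extHom_apply hB _ hb, inv_inv]
  set θ₂ : MulAut (FreeGroup X) := FGHelp.mkAut hB _ _ hinv hinv with hθ₂def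
  have hθ₂ : ∀ b ∈ B, θ₂ b = b⁻¹ := fun b hb => FGHelp.mkAut_apply hB _ _ hinv hinv hb
  -- the automorphism σ sending y ∈ Y x to x * y, and its inverse
  set σf : FreeGroup X → FreeGroup X := fun b =>
    if h : ∃ x, x ∈ S ∧ b ∈ Y x ∧ b ∉ U ∪ S then h.choose * b else b with hσfdef
  set τf : FreeGroup X → FreeGroup X := fun b =>
    if h : ∃ x, x ∈ S ∧ b ∈ Y x ∧ b ∉ U ∪ S then h.choose⁻¹ * b else b with hτfdef
  have hnUS : ∀ x ∈ S, ∀ b ∈ Y x, b ∉ U ∪ S := by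
    rintro x hx b hby (hb | hb)
    · exact ((hdec.disjUY x hx).le_bot ⟨hb, hby⟩)
    · exact ((hdec.disjSY x hx).le_bot ⟨hb, hby⟩)
  have hchoose : ∀ x ∈ S, ∀ b ∈ Y x, ∀ (h : ∃ x, x ∈ S ∧ b ∈ Y x ∧ b ∉ U ∪ S),
      h.choose = x := by
    intro x hx b hby h
    obtain ⟨hx', hb', -⟩ := h.choose_spec
    by_contra hne
    exact (hdec.disjYY _ hx' x hx hne).le_bot ⟨hb', hby⟩
  have hσ1 : ∀ b ∈ U ∪ S, σf b = b := by
    intro b hb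
    rw [hσfdef]
    exact dif_neg (fun h => h.choose_spec.2.2 hb)
  have hτ1 : ∀ b ∈ U ∪ S, τf b = b := by
    intro b hb
    rw [hτfdef]
    exact dif_neg (fun h => h.choose_spec.2.2 hb)
  have hσ2 : ∀ x ∈ S, ∀ b ∈ Y x, σf b = x * b := by
    intro x hx b hby
    have hex : ∃ x, x ∈ S ∧ b ∈ Y x ∧ b ∉ U ∪ S := ⟨x, hx, hby, hnUS x hx b hby⟩
    rw [hσfdef]
    simp only [dif_pos hex, hchoose x hx b hby hex]
  have hτ2 : ∀ x ∈ S, ∀ b ∈ Y x, τf b = x⁻¹ * b := by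
    intro x hx b hby
    have hex : ∃ x, x ∈ S ∧ b ∈ Y x ∧ b ∉ U ∪ S := ⟨x, hx, hby, hnUS x hx b hby⟩
    rw [hτfdef]
    simp only [dif_pos hex, hchoose x hx b hby hex]
  have hστ : ∀ b ∈ B, FGHelp.extHom hB τf (σf b) = b := by
    rintro b ((hb | hb) | hb)
    · rw [hσ1 b (Or.inl hb), FGHelp.extHom_apply hB τf (hUB hb), hτ1 b (Or.inl hb)]
    · rw [hσ1 b (Or.inr hb), FGHelp.extHom_apply hB τf (hSB hb), hτ1 b (Or.inr hb)]
    · obtain ⟨x, hx, hby⟩ := Set.mem_iUnion₂.mp hb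
      rw [hσ2 x hx b hby, map_mul, FGHelp.extHom_apply hB τf (hSB hx),
        FGHelp.extHom_apply hB τf (hYB x hx hby), hτ1 x (Or.inr hx), hτ2 x hx b hby]
      group
  have hτσ : ∀ b ∈ B, FGHelp.extHom hB σf (τf b) = b := by
    rintro b ((hb | hb) | hb)
    · rw [hτ1 b (Or.inl hb), FGHelp.extHom_apply hB σf (hUB hb), hσ1 b (Or.inl hb)]
    · rw [hτ1 b (Or.inr hb), FGHelp.extHom_apply hB σf (hSB hb), hσ1 b (Or.inr hb)]
    · obtain ⟨x, hx, hby⟩ := Set.mem_iUnion₂.mp hb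
      rw [hτ2 x hx b hby, map_mul, MonoidHom.map_inv, FGHelp.extHom_apply hB σf (hSB hx),
        FGHelp.extHom_apply hB σf (hYB x hx hby), hσ1 x (Or.inr hx), hσ2 x hx b hby]
      group
  set σA : MulAut (FreeGroup X) := FGHelp.mkAut hB σf τf hστ hτσ with hσAdef
  have hσA : ∀ b ∈ B, σA b = σf b := fun b hb => FGHelp.mkAut_apply hB _ _ hστ hτσ hb
  set B' : Set (FreeGroup X) := (σA : FreeGroup X → FreeGroup X) '' B with hB'def
  have hB' : FreeGroup.IsBasis B' := FGHelp.isBasis_image hB σA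
  set θ₁ : MulAut (FreeGroup X) := α * θ₂ with hθ₁def
  have hθ₁ : ∀ b' ∈ B', θ₁ b' = b'⁻¹ := by
    rintro - ⟨b, hb, rfl⟩
    rw [hσA b hb]
    rcases hb with (hb | hb) | hb
    · rw [hσ1 b (Or.inl hb)]
      rw [hθ₁def, MulAut.mul_apply, hθ₂ b (hUB hb), map_inv α b, hU b hb]
    · rw [hσ1 b (Or.inr hb)]
      rw [hθ₁def, MulAut.mul_apply, hθ₂ b (hSB hb), map_inv α b, hS b hb]
    · obtain ⟨x, hx, hby⟩ := Set.mem_iUnion₂.mp hb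
      rw [hσ2 x hx b hby]
      rw [hθ₁def, MulAut.mul_apply, map_mul, hθ₂ x (hSB hx), hθ₂ b (hYB x hx hby), map_mul,
        map_inv α x, map_inv α b, hS x hx,
        hY x hx b hby]
      group
  -- θ₂ is a symmetry
  have hsq₂ : θ₂ * θ₂ = 1 := by
    apply MulEquiv.ext
    intro w
    exact θ₂.left_inv w
  obtain ⟨b₀, hb₀⟩ := FGHelp.basis_nonempty hB
  have hne₂ : θ₂ ≠ 1 := by
    intro h
    have h2 := hθ₂ b₀ hb₀
    rw [h] at h2
    exact FGHelp.basis_ne_inv hB hb₀ h2.symm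
  -- θ₁ is a symmetry
  have hsq₁ : θ₁ * θ₁ = 1 := by
    have key : θ₁.toMonoidHom.comp θ₁.toMonoidHom = MonoidHom.id _ :=
      FGHelp.hom_ext_of_basis hB' (fun b' hb' => by
        have h1 : θ₁ (θ₁ b') = b' := by
          rw [hθ₁ b' hb', map_inv θ₁ b', hθ₁ b' hb', inv_inv]
        simpa using h1)
    apply MulEquiv.ext
    intro w
    exact DFunLike.congr_fun key w
  have hb₀' : σA b₀ ∈ B' := ⟨b₀, hb₀, rfl⟩
  have hne₁ : θ₁ ≠ 1 := by
    intro h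
    have h2 := hθ₁ _ hb₀'
    rw [h] at h2
    exact FGHelp.basis_ne_inv hB' hb₀' h2.symm
  refine ⟨θ₁, θ₂, ⟨⟨hne₁, by rw [pow_two]; exact hsq₁⟩, B', hB', hθ₁⟩,
    ⟨⟨hne₂, by rw [pow_two]; exact hsq₂⟩, B, hB, hθ₂⟩, ?_⟩
  rw [hθ₁def, mul_assoc, hsq₂, mul_one]
end

section
/- Let ψ ∈ Aut(F) be a 1-involution with a canonical basis V ⊔ {x} ⊔ Y such that ψx = x⁻¹, ψy = x y x⁻¹ for all y ∈ Y, and ψv = v for all v ∈ V, where |Y| + 1 ≤ |V|. Then every soft involution of Aut(F) of type ⟨κ; |Y|+1, |Y|+1⟩ is a product of two conjugates of ψ in Aut(F). -/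
open Pointwise

open scoped Classical

namespace MyAux
open Cardinal
variable {X : Type*}

lemma closure_eq_top {S : Set (FreeGroup X)} (h : FreeGroup.IsBasis S) :
    Subgroup.closure S = ⊤ := by
  have h1 : (FreeGroup.lift (fun s : S => (s : FreeGroup X))).range = ⊤ :=
    MonoidHom.range_eq_top.mpr h.surjective
  rw [FreeGroup.range_lift_eq_closure, Subtype.range_coe] at h1
  exact h1

lemma hom_ext {S : Set (FreeGroup X)} (hS : FreeGroup.IsBasis S)
    {G : Type*} [Group G] {f g : FreeGroup X →* G} (h : ∀ s ∈ S, f s = g s) : f = g :=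
  MonoidHom.eq_of_eqOn_dense (closure_eq_top hS) h

lemma mulAut_ext {S : Set (FreeGroup X)} (hS : FreeGroup.IsBasis S)
    {f g : MulAut (FreeGroup X)} (h : ∀ s ∈ S, f s = g s) : f = g := by
  have h2 : (f : FreeGroup X →* FreeGroup X) = g := hom_ext hS h
  exact MulEquiv.ext fun y => DFunLike.congr_fun h2 y

noncomputable def basisEquiv {S : Set (FreeGroup X)} (h : FreeGroup.IsBasis S) :
    FreeGroup S ≃* FreeGroup X :=
  MulEquiv.ofBijective (FreeGroup.lift (fun s : S => (s : FreeGroup X))) h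

@[simp] lemma basisEquiv_of {S : Set (FreeGroup X)} (h : FreeGroup.IsBasis S) (s : S) :
    basisEquiv h (FreeGroup.of s) = (s : FreeGroup X) := by
  show FreeGroup.lift (fun s : S => (s : FreeGroup X)) (FreeGroup.of s) = _
  simp [basisEquiv]

@[simp] lemma basisEquiv_symm_apply {S : Set (FreeGroup X)} (h : FreeGroup.IsBasis S)
    (s : FreeGroup X) (hs : s ∈ S) : (basisEquiv h).symm s = FreeGroup.of (⟨s, hs⟩ : S) := by
  rw [MulEquiv.symm_apply_eq, basisEquiv_of]

/-- The endomorphism of `FreeGroup X` sending each basis element `s ∈ S` to `g s`. -/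
noncomputable def endOfBasis {S : Set (FreeGroup X)} (h : FreeGroup.IsBasis S)
    (g : S → FreeGroup X) : FreeGroup X →* FreeGroup X :=
  (FreeGroup.lift g).comp (basisEquiv h).symm.toMonoidHom

lemma endOfBasis_apply {S : Set (FreeGroup X)} (h : FreeGroup.IsBasis S)
    (g : S → FreeGroup X) (s : FreeGroup X) (hs : s ∈ S) :
    endOfBasis h g s = g ⟨s, hs⟩ := by
  simp [endOfBasis, basisEquiv_symm_apply h s hs]

lemma infinite_of_basis {X : Type u} [Infinite X] {S : Set (FreeGroup X)}
    (h : FreeGroup.IsBasis S) : S.Infinite := by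
  intro hfin
  set f : FreeGroup X →* Multiplicative (X →₀ ℤ) :=
    FreeGroup.lift (fun a => Multiplicative.ofAdd (Finsupp.single a (1 : ℤ))) with hf
  have hT : (⋃ s ∈ S, ((Multiplicative.toAdd (f s)).support : Set X)).Finite :=
    hfin.biUnion (fun s _ => (Multiplicative.toAdd (f s)).support.finite_toSet)
  obtain ⟨x₀, hx₀⟩ := hT.infinite_compl.nonempty
  set π : Multiplicative (X →₀ ℤ) →* Multiplicative ℤ :=
    AddMonoidHom.toMultiplicative (Finsupp.applyAddHom x₀) with hπ
  have h1 : π.comp f = 1 := by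
    apply MonoidHom.eq_of_eqOn_dense (closure_eq_top h)
    intro s hs
    have hx₀s : x₀ ∉ (Multiplicative.toAdd (f s)).support := by
      intro hmem
      exact hx₀ (Set.mem_iUnion₂.mpr ⟨s, hs, hmem⟩)
    rw [Finsupp.notMem_support_iff] at hx₀s
    show π (f s) = 1
    simp [hπ, AddMonoidHom.toMultiplicative, hx₀s]
  have h2 : (π.comp f) (FreeGroup.of x₀) = 1 := by rw [h1]; rfl
  simp [hπ, hf, AddMonoidHom.toMultiplicative] at h2

lemma mk_freeGroup' (α : Type u) [Infinite α] : #(FreeGroup α) = #α := by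
  rw [Cardinal.mk_freeGroup, max_eq_left (Cardinal.aleph0_le_mk α)]

lemma mk_basis {X : Type u} [Infinite X] {S : Set (FreeGroup X)}
    (h : FreeGroup.IsBasis S) : #S = #X := by
  have hSinf : S.Infinite := infinite_of_basis h
  haveI : Infinite S := hSinf.to_subtype
  calc #S = #(FreeGroup S) := (mk_freeGroup' _).symm
  _ = #(FreeGroup X) := Cardinal.mk_congr (Equiv.ofBijective _ h)
  _ = #X := mk_freeGroup' X

lemma key (ψ ρ : MulAut (FreeGroup X))
    {V Y : Set (FreeGroup X)} {x : FreeGroup X}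
    (hbasisB : FreeGroup.IsBasis (V ∪ {x} ∪ Y))
    (hxV : x ∉ V) (hVY : Disjoint V Y) (hxY : x ∉ Y)
    (hψV : ∀ v ∈ V, ψ v = v) (hψx : ψ x = x⁻¹) (hψY : ∀ y ∈ Y, ψ y = x * y * x⁻¹)
    {W Z : Set (FreeGroup X)} {a : FreeGroup X}
    (hbasisC : FreeGroup.IsBasis (W ∪ {a} ∪ Z))
    (haW : a ∉ W) (hWZ : Disjoint W Z) (haZ : a ∉ Z)
    (hρW : ∀ w ∈ W, ρ w = w) (hρa : ρ a = a⁻¹) (hρZ : ∀ z ∈ Z, ρ z = a * z * a⁻¹)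
    (hcardW : Cardinal.mk W = Cardinal.mk V) (hcardZ : Cardinal.mk Z = Cardinal.mk Y) :
    IsConj ψ ρ := by
  obtain ⟨eV⟩ := Cardinal.eq.mp hcardW.symm
  obtain ⟨eY⟩ := Cardinal.eq.mp hcardZ.symm
  set B : Set (FreeGroup X) := V ∪ {x} ∪ Y with hBdef
  set C : Set (FreeGroup X) := W ∪ {a} ∪ Z with hCdef
  have hVB : V ⊆ B := fun v hv => Set.mem_union_left _ (Set.mem_union_left _ hv)
  have hxB : x ∈ B := Set.mem_union_left _ (Set.mem_union_right _ rfl)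
  have hYB : Y ⊆ B := fun y hy => Set.mem_union_right _ hy
  have hWC : W ⊆ C := fun w hw => Set.mem_union_left _ (Set.mem_union_left _ hw)
  have haC : a ∈ C := Set.mem_union_left _ (Set.mem_union_right _ rfl)
  have hZC : Z ⊆ C := fun z hz => Set.mem_union_right _ hz
  set gσ : B → FreeGroup X := fun b =>
    if h : (b : FreeGroup X) ∈ V then ((eV ⟨b.1, h⟩ : W) : FreeGroup X)
    else if h' : (b : FreeGroup X) ∈ Y then ((eY ⟨b.1, h'⟩ : Z) : FreeGroup X)
    else a with hgσ
  set gτ : C → FreeGroup X := fun c =>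
    if h : (c : FreeGroup X) ∈ W then ((eV.symm ⟨c.1, h⟩ : V) : FreeGroup X)
    else if h' : (c : FreeGroup X) ∈ Z then ((eY.symm ⟨c.1, h'⟩ : Y) : FreeGroup X)
    else x with hgτ
  set σh : FreeGroup X →* FreeGroup X := endOfBasis hbasisB gσ with hσh
  set τh : FreeGroup X →* FreeGroup X := endOfBasis hbasisC gτ with hτh
  have hσV : ∀ v (hv : v ∈ V), σh v = ((eV ⟨v, hv⟩ : W) : FreeGroup X) := by
    intro v hv
    rw [hσh, endOfBasis_apply _ _ v (hVB hv), hgσ]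
    exact dif_pos hv
  have hσx : σh x = a := by
    rw [hσh, endOfBasis_apply _ _ x hxB, hgσ]
    simp only [dif_neg hxV, dif_neg hxY]
  have hσY : ∀ y (hy : y ∈ Y), σh y = ((eY ⟨y, hy⟩ : Z) : FreeGroup X) := by
    intro y hy
    have hnV : y ∉ V := fun h => (Set.disjoint_left.mp hVY h) hy
    rw [hσh, endOfBasis_apply _ _ y (hYB hy), hgσ]
    simp only [dif_neg hnV, dif_pos hy]
  have hτW : ∀ w (hw : w ∈ W), τh w = ((eV.symm ⟨w, hw⟩ : V) : FreeGroup X) := by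
    intro w hw
    rw [hτh, endOfBasis_apply _ _ w (hWC hw), hgτ]
    exact dif_pos hw
  have hτa : τh a = x := by
    rw [hτh, endOfBasis_apply _ _ a haC, hgτ]
    simp only [dif_neg haW, dif_neg haZ]
  have hτZ : ∀ z (hz : z ∈ Z), τh z = ((eY.symm ⟨z, hz⟩ : Y) : FreeGroup X) := by
    intro z hz
    have hnW : z ∉ W := fun h => (Set.disjoint_left.mp hWZ h) hz
    rw [hτh, endOfBasis_apply _ _ z (hZC hz), hgτ]
    simp only [dif_neg hnW, dif_pos hz]
  have hστ : σh.comp τh = MonoidHom.id _ := by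
    apply hom_ext hbasisC
    rintro c ((hc | hc) | hc)
    · show σh (τh c) = c
      rw [hτW c hc, hσV _ (eV.symm ⟨c, hc⟩).2]
      simp
    · rcases hc with rfl
      show σh (τh c) = c
      rw [hτa, hσx]
    · show σh (τh c) = c
      rw [hτZ c hc, hσY _ (eY.symm ⟨c, hc⟩).2]
      simp
  have hτσ : τh.comp σh = MonoidHom.id _ := by
    apply hom_ext hbasisB
    rintro b ((hb | hb) | hb)
    · show τh (σh b) = b
      rw [hσV b hb, hτW _ (eV ⟨b, hb⟩).2]
      simp
    · rcases hb with rfl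
      show τh (σh b) = b
      rw [hσx, hτa]
    · show τh (σh b) = b
      rw [hσY b hb, hτZ _ (eY ⟨b, hb⟩).2]
      simp
  set σ : MulAut (FreeGroup X) := MonoidHom.toMulEquiv σh τh hτσ hστ with hσ
  rw [isConj_iff]
  refine ⟨σ, ?_⟩
  apply mulAut_ext hbasisC
  rintro c ((hc | hc) | hc)
  · have h1 : (σ * ψ * σ⁻¹) c = σh (ψ (τh c)) := rfl
    rw [h1, hτW c hc, hψV _ (eV.symm ⟨c, hc⟩).2, hσV _ (eV.symm ⟨c, hc⟩).2, hρW c hc]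
    simp
  · rcases hc with rfl
    have h1 : (σ * ψ * σ⁻¹) c = σh (ψ (τh c)) := rfl
    rw [h1, hτa, hψx, map_inv, hρa]
    show (σh x)⁻¹ = c⁻¹
    rw [hσx]
  · have h1 : (σ * ψ * σ⁻¹) c = σh (ψ (τh c)) := rfl
    rw [h1, hτZ c hc, hψY _ (eY.symm ⟨c, hc⟩).2, hρZ c hc]
    rw [map_mul, map_mul, map_inv]
    rw [hσx, hσY _ (eY.symm ⟨c, hc⟩).2]
    simp

/-- The endomorphism inverting `a`, conjugating `Z` by `a` and fixing the rest of the
basis `S`. -/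
noncomputable def blockEnd {S : Set (FreeGroup X)} (h : FreeGroup.IsBasis S)
    (a : FreeGroup X) (Z : Set (FreeGroup X)) : FreeGroup X →* FreeGroup X :=
  endOfBasis h (fun b => if (b : FreeGroup X) = a then a⁻¹
    else if (b : FreeGroup X) ∈ Z then a * (b : FreeGroup X) * a⁻¹ else (b : FreeGroup X))

lemma blockEnd_apply_self {S : Set (FreeGroup X)} (h : FreeGroup.IsBasis S)
    (a : FreeGroup X) (Z : Set (FreeGroup X)) (ha : a ∈ S) : blockEnd h a Z a = a⁻¹ := by
  rw [blockEnd, endOfBasis_apply _ _ a ha]; simp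

lemma blockEnd_apply_mem {S : Set (FreeGroup X)} (h : FreeGroup.IsBasis S)
    (a : FreeGroup X) (Z : Set (FreeGroup X)) (y : FreeGroup X) (hy : y ∈ S) (hyZ : y ∈ Z)
    (hne : y ≠ a) : blockEnd h a Z y = a * y * a⁻¹ := by
  rw [blockEnd, endOfBasis_apply _ _ y hy]; simp [hne, hyZ]

lemma blockEnd_apply_fixed {S : Set (FreeGroup X)} (h : FreeGroup.IsBasis S)
    (a : FreeGroup X) (Z : Set (FreeGroup X)) (u : FreeGroup X) (hu : u ∈ S) (hne : u ≠ a)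
    (hnZ : u ∉ Z) : blockEnd h a Z u = u := by
  rw [blockEnd, endOfBasis_apply _ _ u hu]; simp [hne, hnZ]

lemma blockEnd_invol {S : Set (FreeGroup X)} (h : FreeGroup.IsBasis S)
    {a : FreeGroup X} {Z : Set (FreeGroup X)} (ha : a ∈ S) :
    (blockEnd h a Z).comp (blockEnd h a Z) = MonoidHom.id _ := by
  apply hom_ext h
  intro s hs
  show blockEnd h a Z (blockEnd h a Z s) = s
  by_cases h1 : s = a
  · subst h1
    rw [blockEnd_apply_self _ _ _ hs, map_inv, blockEnd_apply_self _ _ _ hs, inv_inv]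
  · by_cases h2 : s ∈ Z
    · rw [blockEnd_apply_mem _ _ _ s hs h2 h1, map_mul, map_mul, map_inv,
        blockEnd_apply_self _ _ _ ha, blockEnd_apply_mem _ _ _ s hs h2 h1]
      group
    · rw [blockEnd_apply_fixed _ _ _ s hs h1 h2, blockEnd_apply_fixed _ _ _ s hs h1 h2]

/-- `blockEnd` as an automorphism. -/
noncomputable def blockAut {S : Set (FreeGroup X)} (h : FreeGroup.IsBasis S)
    (a : FreeGroup X) (Z : Set (FreeGroup X)) (ha : a ∈ S) : MulAut (FreeGroup X) :=
  MonoidHom.toMulEquiv (blockEnd h a Z) (blockEnd h a Z)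
    (blockEnd_invol h ha) (blockEnd_invol h ha)

lemma blockAut_apply {S : Set (FreeGroup X)} (h : FreeGroup.IsBasis S)
    (a : FreeGroup X) (Z : Set (FreeGroup X)) (ha : a ∈ S) (t : FreeGroup X) :
    blockAut h a Z ha t = blockEnd h a Z t := rfl

end MyAux

/-- Let `ψ ∈ Aut F` be a `1`-involution with canonical basis `V ⊔ {x} ⊔ Y`, where
`|Y| + 1 ≤ |V|`. Then every soft involution of `Aut F` of type `⟨κ; |Y|+1, |Y|+1⟩`
(fixed part of cardinality `κ = rank F` and two blocks of size `|Y|+1`) is a product of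
two conjugates of `ψ` in `Aut F`. -/

theorem soft_involution_product_of_two_conjugates (X : Type*) [Infinite X]
    (ψ : MulAut (FreeGroup X)) (hψ : IsInvolution ψ)
    (V Y : Set (FreeGroup X)) (x : FreeGroup X)
    (hB : IsCanonicalBasis ψ V {x} (fun _ => Y))
    (hcard : Cardinal.mk Y + 1 ≤ Cardinal.mk V)
    (φ : MulAut (FreeGroup X)) (hφ : IsInvolution φ)
    (U' : Set (FreeGroup X)) (x₁ x₂ : FreeGroup X) (Y₁ Y₂ : Set (FreeGroup X))
    (hx12 : x₁ ≠ x₂)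
    (hφB : IsCanonicalBasis φ U' {x₁, x₂} (fun z => if z = x₁ then Y₁ else Y₂))
    (hU' : Cardinal.mk U' = Cardinal.mk X)
    (hY₁ : Cardinal.mk Y₁ = Cardinal.mk Y)
    (hY₂ : Cardinal.mk Y₂ = Cardinal.mk Y) :
    ∃ ψ₁ ψ₂ : MulAut (FreeGroup X), IsConj ψ ψ₁ ∧ IsConj ψ ψ₂ ∧ φ = ψ₁ * ψ₂ := by
  classical
  have hBbasis : FreeGroup.IsBasis (V ∪ {x} ∪ Y) := by
    have h0 : (⋃ z ∈ ({x} : Set (FreeGroup X)), (fun _ => Y) z) = Y := by simp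
    have h1 := hB.1.isBasis
    rwa [h0] at h1
  have hxV : x ∉ V := fun h => (Set.disjoint_left.mp hB.1.disjUS h) rfl
  have hVY : Disjoint V Y := hB.1.disjUY x rfl
  have hxY : x ∉ Y := Set.disjoint_left.mp (hB.1.disjSY x rfl) rfl
  have hψV : ∀ v ∈ V, ψ v = v := hB.2.1
  have hψx : ψ x = x⁻¹ := hB.2.2.1 x rfl
  have hψY : ∀ y ∈ Y, ψ y = x * y * x⁻¹ := fun y hy => hB.2.2.2 x rfl y hy
  have hx₁S : x₁ ∈ ({x₁, x₂} : Set (FreeGroup X)) := Set.mem_insert _ _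
  have hx₂S : x₂ ∈ ({x₁, x₂} : Set (FreeGroup X)) := Set.mem_insert_of_mem _ rfl
  have hif₁ : (if x₁ = x₁ then Y₁ else Y₂) = Y₁ := if_pos rfl
  have hif₂ : (if x₂ = x₁ then Y₁ else Y₂) = Y₂ := if_neg (Ne.symm hx12)
  have hDbasis : FreeGroup.IsBasis (U' ∪ {x₁, x₂} ∪ (Y₁ ∪ Y₂)) := by
    have h0 : (⋃ z ∈ ({x₁, x₂} : Set (FreeGroup X)),
        (fun z => if z = x₁ then Y₁ else Y₂) z) = Y₁ ∪ Y₂ := by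
      rw [Set.biUnion_pair]
      simp [Ne.symm hx12]
    have h1 := hφB.1.isBasis
    rwa [h0] at h1
  have hx₁U : x₁ ∉ U' := fun h => (Set.disjoint_left.mp hφB.1.disjUS h) hx₁S
  have hx₂U : x₂ ∉ U' := fun h => (Set.disjoint_left.mp hφB.1.disjUS h) hx₂S
  have hUY₁ : Disjoint U' Y₁ := by have h := hφB.1.disjUY x₁ hx₁S; rwa [hif₁] at h
  have hUY₂ : Disjoint U' Y₂ := by have h := hφB.1.disjUY x₂ hx₂S; rwa [hif₂] at h
  have hSY₁ : Disjoint ({x₁, x₂} : Set (FreeGroup X)) Y₁ := by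
    have h := hφB.1.disjSY x₁ hx₁S; rwa [hif₁] at h
  have hSY₂ : Disjoint ({x₁, x₂} : Set (FreeGroup X)) Y₂ := by
    have h := hφB.1.disjSY x₂ hx₂S; rwa [hif₂] at h
  have hx₁Y₁ : x₁ ∉ Y₁ := Set.disjoint_left.mp hSY₁ hx₁S
  have hx₂Y₁ : x₂ ∉ Y₁ := Set.disjoint_left.mp hSY₁ hx₂S
  have hx₁Y₂ : x₁ ∉ Y₂ := Set.disjoint_left.mp hSY₂ hx₁S
  have hx₂Y₂ : x₂ ∉ Y₂ := Set.disjoint_left.mp hSY₂ hx₂S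
  have hY₁Y₂ : Disjoint Y₁ Y₂ := by
    have h := hφB.1.disjYY x₁ hx₁S x₂ hx₂S hx12; rwa [hif₁, hif₂] at h
  have hφU : ∀ u ∈ U', φ u = u := hφB.2.1
  have hφx₁ : φ x₁ = x₁⁻¹ := hφB.2.2.1 x₁ hx₁S
  have hφx₂ : φ x₂ = x₂⁻¹ := hφB.2.2.1 x₂ hx₂S
  have hφY₁ : ∀ y ∈ Y₁, φ y = x₁ * y * x₁⁻¹ := fun y hy =>
    hφB.2.2.2 x₁ hx₁S y (by simpa [hif₁] using hy)
  have hφY₂ : ∀ y ∈ Y₂, φ y = x₂ * y * x₂⁻¹ := fun y hy =>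
    hφB.2.2.2 x₂ hx₂S y (by simpa [hif₂] using hy)
  set D : Set (FreeGroup X) := U' ∪ {x₁, x₂} ∪ (Y₁ ∪ Y₂) with hD
  have hUD : U' ⊆ D := fun u hu => Set.mem_union_left _ (Set.mem_union_left _ hu)
  have hx₁D : x₁ ∈ D := Set.mem_union_left _ (Set.mem_union_right _ hx₁S)
  have hx₂D : x₂ ∈ D := Set.mem_union_left _ (Set.mem_union_right _ hx₂S)
  have hY₁D : Y₁ ⊆ D := fun y hy => Set.mem_union_right _ (Set.mem_union_left _ hy)
  have hY₂D : Y₂ ⊆ D := fun y hy => Set.mem_union_right _ (Set.mem_union_right _ hy)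
  -- cardinal bookkeeping
  have hmkB : Cardinal.mk (V ∪ {x} ∪ Y : Set (FreeGroup X)) = Cardinal.mk X :=
    MyAux.mk_basis hBbasis
  have hmkD : Cardinal.mk D = Cardinal.mk X := MyAux.mk_basis hDbasis
  have hdecompB : Cardinal.mk X = Cardinal.mk V + 1 + Cardinal.mk Y := by
    rw [← hmkB,
      Cardinal.mk_union_of_disjoint
        (Set.disjoint_union_left.mpr ⟨hVY, Set.disjoint_singleton_left.mpr hxY⟩),
      Cardinal.mk_union_of_disjoint (Set.disjoint_singleton_right.mpr hxV),
      Cardinal.mk_singleton]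
  have hYleV : Cardinal.mk Y ≤ Cardinal.mk V := le_trans (self_le_add_right _ 1) hcard
  have hVinf : Cardinal.aleph0 ≤ Cardinal.mk V := by
    by_contra hlt
    push_neg at hlt
    have hXlt : Cardinal.mk X < Cardinal.aleph0 := by
      rw [hdecompB]
      exact Cardinal.add_lt_aleph0
        (Cardinal.add_lt_aleph0 hlt Cardinal.one_lt_aleph0) (hYleV.trans_lt hlt)
    exact absurd (Cardinal.aleph0_le_mk X) (not_le.mpr hXlt)
  have hVX : Cardinal.mk V = Cardinal.mk X := by
    apply le_antisymm
    · exact le_trans (Cardinal.mk_le_mk_of_subset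
        (fun v hv => Set.mem_union_left _ (Set.mem_union_left _ hv))) hmkB.le
    · rw [hdecompB]
      calc Cardinal.mk V + 1 + Cardinal.mk Y
          ≤ Cardinal.mk V + Cardinal.mk V + Cardinal.mk V :=
            add_le_add (add_le_add le_rfl (le_trans Cardinal.one_lt_aleph0.le hVinf)) hYleV
        _ = Cardinal.mk V := by rw [Cardinal.add_eq_self hVinf, Cardinal.add_eq_self hVinf]
  have hmkW₁ : Cardinal.mk (U' ∪ {x₂} ∪ Y₂ : Set (FreeGroup X)) = Cardinal.mk V := by
    rw [hVX]
    apply le_antisymm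
    · refine le_trans (Cardinal.mk_le_mk_of_subset ?_) hmkD.le
      rintro t ((ht | ht) | ht)
      · exact hUD ht
      · rcases ht with rfl; exact hx₂D
      · exact hY₂D ht
    · rw [← hU']
      exact Cardinal.mk_le_mk_of_subset
        (fun u hu => Set.mem_union_left _ (Set.mem_union_left _ hu))
  have hmkW₂ : Cardinal.mk (U' ∪ {x₁} ∪ Y₁ : Set (FreeGroup X)) = Cardinal.mk V := by
    rw [hVX]
    apply le_antisymm
    · refine le_trans (Cardinal.mk_le_mk_of_subset ?_) hmkD.le
      rintro t ((ht | ht) | ht)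
      · exact hUD ht
      · rcases ht with rfl; exact hx₁D
      · exact hY₁D ht
    · rw [← hU']
      exact Cardinal.mk_le_mk_of_subset
        (fun u hu => Set.mem_union_left _ (Set.mem_union_left _ hu))
  -- the two conjugates
  set ρ₁ : MulAut (FreeGroup X) := MyAux.blockAut hDbasis x₁ Y₁ hx₁D with hρ₁
  set ρ₂ : MulAut (FreeGroup X) := MyAux.blockAut hDbasis x₂ Y₂ hx₂D with hρ₂
  have hρ₁app : ∀ t, ρ₁ t = MyAux.blockEnd hDbasis x₁ Y₁ t := fun t => rfl
  have hρ₂app : ∀ t, ρ₂ t = MyAux.blockEnd hDbasis x₂ Y₂ t := fun t => rfl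
  -- ρ₁ values
  have hρ₁U : ∀ u ∈ U', ρ₁ u = u := fun u hu => by
    rw [hρ₁app]
    exact MyAux.blockEnd_apply_fixed _ _ _ u (hUD hu) (fun h => hx₁U (h ▸ hu))
      (fun h => Set.disjoint_left.mp hUY₁ hu h)
  have hρ₁x₁ : ρ₁ x₁ = x₁⁻¹ := by
    rw [hρ₁app]; exact MyAux.blockEnd_apply_self _ _ _ hx₁D
  have hρ₁x₂ : ρ₁ x₂ = x₂ := by
    rw [hρ₁app]
    exact MyAux.blockEnd_apply_fixed _ _ _ x₂ hx₂D (Ne.symm hx12) hx₂Y₁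
  have hρ₁Y₁ : ∀ y ∈ Y₁, ρ₁ y = x₁ * y * x₁⁻¹ := fun y hy => by
    rw [hρ₁app]
    exact MyAux.blockEnd_apply_mem _ _ _ y (hY₁D hy) hy (fun h => hx₁Y₁ (h ▸ hy))
  have hρ₁Y₂ : ∀ y ∈ Y₂, ρ₁ y = y := fun y hy => by
    rw [hρ₁app]
    exact MyAux.blockEnd_apply_fixed _ _ _ y (hY₂D hy) (fun h => hx₁Y₂ (h ▸ hy))
      (fun h => Set.disjoint_left.mp hY₁Y₂ h hy)
  -- ρ₂ values
  have hρ₂U : ∀ u ∈ U', ρ₂ u = u := fun u hu => by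
    rw [hρ₂app]
    exact MyAux.blockEnd_apply_fixed _ _ _ u (hUD hu) (fun h => hx₂U (h ▸ hu))
      (fun h => Set.disjoint_left.mp hUY₂ hu h)
  have hρ₂x₂ : ρ₂ x₂ = x₂⁻¹ := by
    rw [hρ₂app]; exact MyAux.blockEnd_apply_self _ _ _ hx₂D
  have hρ₂x₁ : ρ₂ x₁ = x₁ := by
    rw [hρ₂app]
    exact MyAux.blockEnd_apply_fixed _ _ _ x₁ hx₁D hx12 hx₁Y₂
  have hρ₂Y₂ : ∀ y ∈ Y₂, ρ₂ y = x₂ * y * x₂⁻¹ := fun y hy => by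
    rw [hρ₂app]
    exact MyAux.blockEnd_apply_mem _ _ _ y (hY₂D hy) hy (fun h => hx₂Y₂ (h ▸ hy))
  have hρ₂Y₁ : ∀ y ∈ Y₁, ρ₂ y = y := fun y hy => by
    rw [hρ₂app]
    exact MyAux.blockEnd_apply_fixed _ _ _ y (hY₁D hy) (fun h => hx₂Y₁ (h ▸ hy))
      (fun h => Set.disjoint_left.mp hY₁Y₂ hy h)
  -- φ = ρ₁ * ρ₂
  have hφeq : φ = ρ₁ * ρ₂ := by
    apply MyAux.mulAut_ext hDbasis
    rintro b ((hb | hb) | hb)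
    · rw [MulAut.mul_apply, hρ₂U b hb, hρ₁U b hb, hφU b hb]
    · rcases hb with rfl | rfl
      · rw [MulAut.mul_apply, hρ₂x₁, hρ₁x₁, hφx₁]
      · rw [MulAut.mul_apply, hρ₂x₂, map_inv, hρ₁x₂, hφx₂]
    · rcases hb with hb | hb
      · rw [MulAut.mul_apply, hρ₂Y₁ b hb, hρ₁Y₁ b hb, hφY₁ b hb]
      · rw [MulAut.mul_apply, hρ₂Y₂ b hb, map_mul, map_mul, map_inv, hρ₁x₂, hρ₁Y₂ b hb,
          hφY₂ b hb]
  -- conjugacy of ρ₁ with ψ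
  have hbasisC₁ : FreeGroup.IsBasis ((U' ∪ {x₂} ∪ Y₂) ∪ {x₁} ∪ Y₁) := by
    have heq : (U' ∪ {x₂} ∪ Y₂) ∪ {x₁} ∪ Y₁ = D := by
      rw [hD]
      ext t
      simp only [Set.mem_union, Set.mem_singleton_iff, Set.mem_insert_iff]
      tauto
    rw [heq]; exact hDbasis
  have hconj₁ : IsConj ψ ρ₁ := by
    refine MyAux.key ψ ρ₁ hBbasis hxV hVY hxY hψV hψx hψY hbasisC₁ ?_ ?_ hx₁Y₁ ?_ hρ₁x₁
      (fun z hz => hρ₁Y₁ z hz) hmkW₁ hY₁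
    · rintro ((h | h) | h)
      · exact hx₁U h
      · exact hx12 h
      · exact hx₁Y₂ h
    · exact Set.disjoint_union_left.mpr
        ⟨Set.disjoint_union_left.mpr ⟨hUY₁, Set.disjoint_singleton_left.mpr hx₂Y₁⟩,
          hY₁Y₂.symm⟩
    · rintro w ((hw | hw) | hw)
      · exact hρ₁U w hw
      · rcases hw with rfl; exact hρ₁x₂
      · exact hρ₁Y₂ w hw
  have hbasisC₂ : FreeGroup.IsBasis ((U' ∪ {x₁} ∪ Y₁) ∪ {x₂} ∪ Y₂) := by
    have heq : (U' ∪ {x₁} ∪ Y₁) ∪ {x₂} ∪ Y₂ = D := by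
      rw [hD]
      ext t
      simp only [Set.mem_union, Set.mem_singleton_iff, Set.mem_insert_iff]
      tauto
    rw [heq]; exact hDbasis
  have hconj₂ : IsConj ψ ρ₂ := by
    refine MyAux.key ψ ρ₂ hBbasis hxV hVY hxY hψV hψx hψY hbasisC₂ ?_ ?_ hx₂Y₂ ?_ hρ₂x₂
      (fun z hz => hρ₂Y₂ z hz) hmkW₂ hY₂
    · rintro ((h | h) | h)
      · exact hx₂U h
      · exact hx12 h.symm
      · exact hx₂Y₁ h
    · exact Set.disjoint_union_left.mpr
        ⟨Set.disjoint_union_left.mpr ⟨hUY₂, Set.disjoint_singleton_left.mpr hx₁Y₂⟩,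
          hY₁Y₂⟩
    · rintro w ((hw | hw) | hw)
      · exact hρ₂U w hw
      · rcases hw with rfl; exact hρ₂x₁
      · exact hρ₂Y₁ w hw
  exact ⟨ρ₁, ρ₂, hconj₁, hconj₂, hφeq⟩
end

section
/- No 1-involution of Out(F) is a square in Out(F): if f ∈ Out(F) is induced by a 1-involution of Aut(F), then there is no g ∈ Out(F) with g² = f. -/
open Pointwise

/-- The abelianization map of a free group, valued in `T →₀ ℤ`. -/
private noncomputable def abmap (T : Type*) : FreeGroup T →* Multiplicative (T →₀ ℤ) :=
  FreeGroup.lift fun t => Multiplicative.ofAdd (Finsupp.single t 1)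

private lemma abmap_of {T : Type*} (t : T) :
    abmap T (FreeGroup.of t) = Multiplicative.ofAdd (Finsupp.single t 1) :=
  FreeGroup.lift_apply_of

/-- Any endomorphism of a group with a free basis indexed by `T` induces an additive
endomorphism of `T →₀ ℤ` compatible with the abelianization map. -/
private lemma abmap_key {T G : Type*} [Group G] (e : FreeGroup T ≃* G) (σ : G →* G) :
    ∃ Q : (T →₀ ℤ) →+ (T →₀ ℤ),
      (∀ t : T, Multiplicative.ofAdd (Q (Finsupp.single t 1))
          = abmap T (e.symm (σ (e (FreeGroup.of t))))) ∧
      (∀ g : G, abmap T (e.symm (σ g))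
          = Multiplicative.ofAdd (Q ((abmap T (e.symm g)).toAdd))) := by
  refine ⟨Finsupp.liftAddHom (fun t =>
      zmultiplesHom _ ((abmap T (e.symm (σ (e (FreeGroup.of t))))).toAdd)), ?_, ?_⟩
  · intro t
    rw [Finsupp.liftAddHom_apply_single]
    simp [zmultiplesHom]
  · have key : (abmap T).comp ((e.symm.toMonoidHom.comp σ).comp e.toMonoidHom)
        = (AddMonoidHom.toMultiplicative (Finsupp.liftAddHom (fun t =>
            zmultiplesHom _ ((abmap T (e.symm (σ (e (FreeGroup.of t))))).toAdd)))).comp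
          (abmap T) := by
      apply FreeGroup.ext_hom
      intro t
      simp only [MonoidHom.comp_apply, MulEquiv.coe_toMonoidHom, abmap_of,
        AddMonoidHom.toMultiplicative_apply_apply, toAdd_ofAdd,
        Finsupp.liftAddHom_apply_single]
      simp [zmultiplesHom]
    intro g
    have := DFunLike.congr_fun key (e.symm g)
    simpa [MulEquiv.apply_symm_apply] using this

private lemma main_aux {X : Type*} (ψ β : MulAut (FreeGroup X)) (a : FreeGroup X)
    (T : Set (FreeGroup X)) (x : FreeGroup X) (hx : x ∈ T)
    (hbasis : FreeGroup.IsBasis T)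
    (hfix : ∀ t : T, (t : FreeGroup X) ≠ x →
      (ψ (t : FreeGroup X) = (t : FreeGroup X) ∨
        ψ (t : FreeGroup X) = x * (t : FreeGroup X) * x⁻¹))
    (hψx : ψ x = x⁻¹)
    (hββ : ∀ w, β (β w) = ψ (a * w * a⁻¹)) : False := by
  classical
  let e : FreeGroup T ≃* FreeGroup X :=
    MulEquiv.ofBijective (FreeGroup.lift fun s : T => (s : FreeGroup X)) hbasis
  have he_of : ∀ t : T, e (FreeGroup.of t) = (t : FreeGroup X) := fun t => FreeGroup.lift_apply_of
  have hesymmt : ∀ t : T, e.symm ((t : FreeGroup X)) = FreeGroup.of t := by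
    intro t
    rw [← he_of t]
    exact e.symm_apply_apply _
  set bx : T := ⟨x, hx⟩ with hbx
  have he_x : e (FreeGroup.of bx) = x := he_of bx
  have hesymmx : e.symm x = FreeGroup.of bx := hesymmt bx
  have hmx : abmap T (e.symm x) = Multiplicative.ofAdd (Finsupp.single bx 1) := by
    rw [hesymmx, abmap_of]
  have hconj : ∀ v u : FreeGroup X,
      abmap T (e.symm (v * u * v⁻¹)) = abmap T (e.symm u) := by
    intro v u
    simp only [map_mul, map_inv]
    rw [mul_comm (abmap T (e.symm v)) (abmap T (e.symm u)), mul_inv_cancel_right]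
  obtain ⟨P, hP1, hP2⟩ := abmap_key e ψ.toMonoidHom
  obtain ⟨R, hR1, hR2⟩ := abmap_key e β.toMonoidHom
  simp only [MulEquiv.coe_toMonoidHom] at hP1 hP2 hR1 hR2
  -- P on the distinguished generator
  have hPx : P (Finsupp.single bx 1) = -Finsupp.single bx 1 := by
    have h := hP1 bx
    rw [he_x] at h
    rw [hψx, map_inv, map_inv, hmx] at h
    rw [← ofAdd_neg] at h
    exact Multiplicative.ofAdd.injective h
  -- P on the other generators
  have hPt : ∀ t : T, t ≠ bx → P (Finsupp.single t 1) = Finsupp.single t 1 := by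
    intro t ht
    have htx : (t : FreeGroup X) ≠ x := fun h => ht (Subtype.ext h)
    have h := hP1 t
    rw [he_of t] at h
    rcases hfix t htx with hcase | hcase
    · rw [hcase, hesymmt t, abmap_of] at h
      exact Multiplicative.ofAdd.injective h
    · rw [hcase, hconj x ((t : FreeGroup X)), hesymmt t, abmap_of] at h
      exact Multiplicative.ofAdd.injective h
  have hns : ∀ (c : T) (n : ℤ), (Finsupp.single c n) = n • Finsupp.single c (1 : ℤ) := by
    intro c n
    rw [Finsupp.smul_single, smul_eq_mul, mul_one]
  -- coordinates away from bx are preserved by P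
  have hcoord : ∀ t : T, t ≠ bx → ∀ s : T →₀ ℤ, (P s) t = s t := by
    intro t ht
    have hext : (Finsupp.applyAddHom (M := ℤ) t).comp P = Finsupp.applyAddHom (M := ℤ) t := by
      apply Finsupp.addHom_ext
      intro c n
      simp only [AddMonoidHom.comp_apply, Finsupp.applyAddHom_apply]
      rw [hns c n, map_zsmul]
      by_cases hc : c = bx
      · subst hc
        rw [hPx]
        simp [Finsupp.single_apply, Ne.symm ht]
      · rw [hPt c hc, ← hns c n]
    exact fun s => DFunLike.congr_fun hext s
  -- image of x under β in the abelianization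
  have hv : abmap T (e.symm (β x)) = Multiplicative.ofAdd (R (Finsupp.single bx 1)) := by
    have h := (hR1 bx).symm
    rw [he_x] at h
    exact h
  have hψax : abmap T (e.symm (ψ (a * x * a⁻¹)))
      = Multiplicative.ofAdd (-(Finsupp.single bx 1)) := by
    rw [hP2 (a * x * a⁻¹), hconj a x, hmx, toAdd_ofAdd, hPx]
  -- β³x computed two ways: P and R commute on the x-coordinate vector
  have hA1 : abmap T (e.symm (β (β (β x))))
      = Multiplicative.ofAdd (R (-(Finsupp.single bx 1))) := by
    rw [hββ x, hR2 (ψ (a * x * a⁻¹)), hψax, toAdd_ofAdd]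
  have hA2 : abmap T (e.symm (β (β (β x))))
      = Multiplicative.ofAdd (P (R (Finsupp.single bx 1))) := by
    rw [hββ (β x), hP2 (a * β x * a⁻¹), hconj a (β x), hv, toAdd_ofAdd]
  have hPv : P (R (Finsupp.single bx 1)) = -(R (Finsupp.single bx 1)) := by
    have h := Multiplicative.ofAdd.injective (hA2.symm.trans hA1)
    rw [map_neg] at h
    exact h
  have hvt : ∀ t : T, t ≠ bx → R (Finsupp.single bx 1) t = 0 := by
    intro t ht
    have h1 := hcoord t ht (R (Finsupp.single bx 1))
    rw [hPv, Finsupp.neg_apply] at h1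
    omega
  set t0 : ℤ := R (Finsupp.single bx 1) bx with ht0
  have hveq : R (Finsupp.single bx 1) = Finsupp.single bx t0 := by
    ext t
    by_cases ht : t = bx
    · subst ht; rw [Finsupp.single_eq_same]
    · rw [hvt t ht, Finsupp.single_eq_of_ne' (Ne.symm ht)]
  -- β²x computed two ways
  have hB1 : abmap T (e.symm (β (β x)))
      = Multiplicative.ofAdd (R (R (Finsupp.single bx 1))) := by
    rw [hR2 (β x), hv, toAdd_ofAdd]
  have hB2 : abmap T (e.symm (β (β x)))
      = Multiplicative.ofAdd (-(Finsupp.single bx 1)) := by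
    rw [hββ x]
    exact hψax
  have key : R (R (Finsupp.single bx 1)) = -(Finsupp.single bx 1) :=
    Multiplicative.ofAdd.injective (hB1.symm.trans hB2)
  rw [hveq, hns bx t0, map_zsmul, hveq, Finsupp.smul_single, smul_eq_mul] at key
  have hfin := DFunLike.congr_fun key bx
  rw [Finsupp.single_eq_same, Finsupp.neg_apply, Finsupp.single_eq_same] at hfin
  nlinarith [mul_self_nonneg t0]

/-- No `1`-involution of `Out F` is a square in `Out F`: if `f ∈ Out F` is induced by a
`1`-involution of `Aut F`, then there is no `g ∈ Out F` with `g² = f`. -/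
theorem one_involution_not_square (X : Type*) [Infinite X]
    (f : OutAut (FreeGroup X))
    (hf : ∃ ψ : MulAut (FreeGroup X), IsOneInvolution ψ ∧ toOut ψ = f) :
    ¬ ∃ g : OutAut (FreeGroup X), g ^ 2 = f := by
  obtain ⟨ψ, ⟨-, U, Y, x, hdec, hU, hS, hY⟩, hψf⟩ := hf
  rintro ⟨g, rfl⟩
  obtain ⟨β, rfl⟩ := QuotientGroup.mk'_surjective (Inn (FreeGroup X)) g
  have h2 : ∃ z ∈ Inn (FreeGroup X), ψ * z = β ^ 2 :=
    (QuotientGroup.mk'_eq_mk' (Inn (FreeGroup X))).mp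
      (hψf.trans (map_pow (QuotientGroup.mk' (Inn (FreeGroup X))) β 2).symm)
  obtain ⟨z, hz, hsq⟩ := h2
  obtain ⟨a, rfl⟩ := hz
  refine main_aux ψ β a (U ∪ {x} ∪ ⋃ z ∈ ({x} : Set (FreeGroup X)), Y) x
    (Set.mem_union_left _ (Set.mem_union_right _ rfl)) hdec.isBasis ?_ (hS x rfl) ?_
  · intro t hne
    rcases t.2 with (hu | hx1) | hy
    · exact Or.inl (hU _ hu)
    · exact absurd hx1 hne
    · exact Or.inr (hY x rfl _ (by simpa using hy))
  · intro w
    calc β (β w) = (β ^ 2) w := by rw [pow_two]; rfl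
    _ = (ψ * MulAut.conj a) w := by rw [hsq]
    _ = ψ (a * w * a⁻¹) := rfl
end

section
/- Let φ ∈ Aut(F) be an extremal involution with a canonical basis {x} ⊔ U such that φx = x⁻¹ and φu = u for all u ∈ U. If s ∈ Out(F) commutes with φ̂, then there is a σ ∈ Aut(F) which induces s, such that σx = x^{±1} and σ⟨U⟩ = ⟨U⟩, where ⟨U⟩ is the subgroup of F generated by U. -/
open Pointwise

set_option linter.unusedSectionVars false
set_option maxHeartbeats 1000000
set_option linter.unreachableTactic false
set_option linter.unusedTactic false

namespace CEI
open FreeGroup List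

variable {α : Type*} [DecidableEq α]

def NC (a b : α × Bool) : Prop := ¬(a.1 = b.1 ∧ a.2 = !b.2)




/-- no-cancellation between consecutive letters -/

theorem reduce_eq_self_of_chain' : ∀ {L : List (α × Bool)}, List.Chain' NC L → reduce L = L := by
  intro L hL
  induction L with
  | nil => rfl
  | cons x L ih =>
    have htail : reduce L = L := ih hL.tail
    rw [FreeGroup.reduce.cons, htail]
    cases L with
    | nil => rfl
    | cons y t =>
      have hnc : NC x y := List.isChain_cons_cons.1 hL |>.1
      simp only [NC] at hnc
      simp [if_neg hnc]

theorem chain'_of_reduce_eq_self : ∀ {L : List (α × Bool)}, reduce L = L → List.Chain' NC L := by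
  intro L
  induction L with
  | nil => intro _; exact List.isChain_nil
  | cons x L ih =>
    intro h
    rw [FreeGroup.reduce.cons] at h
    have hlen : (reduce L).length ≤ L.length := FreeGroup.Red.length_le (FreeGroup.reduce.red)
    cases hred : reduce L with
    | nil =>
      rw [hred] at h
      simp only [List.casesOn] at h
      have hL : L = [] := by
        have := congrArg List.length h; simpa using this.symm
      subst hL
      exact List.isChain_singleton x
    | cons y t =>
      rw [hred] at h
      simp only at h
      by_cases hc : x.1 = y.1 ∧ x.2 = !y.2
      · rw [if_pos hc] at h
        exfalso
        rw [hred] at hlen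
        have ht : t.length = L.length + 1 := by
          have := congrArg List.length h; simpa using this
        simp [ht] at hlen
      · rw [if_neg hc] at h
        have hL : L = y :: t := by
          have := List.tail_eq_of_cons_eq h; exact this.symm
        have : reduce L = L := by rw [hred, hL]
        have hch := ih this
        rw [hL]
        exact List.isChain_cons_cons.2 ⟨hc, by rwa [hL] at hch⟩

theorem chain'_toWord (g : FreeGroup α) : List.Chain' NC g.toWord :=
  chain'_of_reduce_eq_self (FreeGroup.reduce_toWord g)

/-- concatenation lemma: if the concatenation of reduced words is reduced, it's the word of the product -/
theorem toWord_mul_of_chain' {g h : FreeGroup α} (hc : List.Chain' NC (g.toWord ++ h.toWord)) :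
    (g * h).toWord = g.toWord ++ h.toWord := by
  conv_lhs => rw [← FreeGroup.mk_toWord (x := g), ← FreeGroup.mk_toWord (x := h)]
  rw [FreeGroup.mul_mk, FreeGroup.toWord_mk, reduce_eq_self_of_chain' hc]





-- model definitions
variable (α) in
def xg : FreeGroup (Option α) := FreeGroup.of none

def mflip : Option α × Bool → Option α × Bool
  | (none, b) => (none, !b)
  | (some y, b) => (some y, b)

@[simp] theorem mflip_none (b : Bool) : mflip (α := α) (none, b) = (none, !b) := rfl
@[simp] theorem mflip_some (y : α) (b : Bool) : mflip (some y, b) = (some y, b) := rfl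

theorem mflip_fst (l : Option α × Bool) : (mflip l).1 = l.1 := by
  cases l with | mk a b => cases a <;> rfl

theorem mflip_mflip (l : Option α × Bool) : mflip (mflip l) = l := by
  cases l with | mk a b => cases a <;> simp

variable (α) in
def rhom : FreeGroup (Option α) →* FreeGroup (Option α) :=
  FreeGroup.lift (fun o => Option.casesOn o (FreeGroup.of (none : Option α))⁻¹
    (fun y => FreeGroup.of (some y)))

@[simp] theorem rhom_x : rhom α (xg α) = (xg α)⁻¹ := FreeGroup.lift_apply_of
@[simp] theorem rhom_some (y : α) : rhom α (FreeGroup.of (some y)) = FreeGroup.of (some y) :=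
  FreeGroup.lift_apply_of

theorem rhom_rhom (g : FreeGroup (Option α)) : rhom α (rhom α g) = g := by
  have : (rhom α).comp (rhom α) = MonoidHom.id _ := by
    apply FreeGroup.ext_hom
    intro a
    cases a with
    | none => simp [MonoidHom.comp_apply]; rw [show FreeGroup.of (none : Option α) = xg α from rfl]; simp
    | some y => simp [MonoidHom.comp_apply]
  calc rhom α (rhom α g) = ((rhom α).comp (rhom α)) g := rfl
  _ = g := by rw [this]; rfl

theorem rhom_mk (L : List (Option α × Bool)) :
    rhom α (FreeGroup.mk L) = FreeGroup.mk (L.map mflip) := by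
  induction L with
  | nil =>
    rw [show (FreeGroup.mk ([] : List (Option α × Bool))) = 1 from FreeGroup.one_eq_mk.symm]
    simp only [map_one, List.map_nil]
    exact FreeGroup.one_eq_mk
  | cons l L ih =>
    have : FreeGroup.mk (l :: L) = FreeGroup.mk [l] * FreeGroup.mk L := by
      rw [FreeGroup.mul_mk]; rfl
    rw [this, _root_.map_mul, ih]
    have h1 : rhom α (FreeGroup.mk [l]) = FreeGroup.mk [mflip l] := by
      rcases l with ⟨a, b⟩
      cases a with
      | none =>
        cases b with
        | true =>
          have : FreeGroup.mk [((none : Option α), true)] = xg α := rfl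
          rw [this]; simp only [rhom_x]
          rw [show (xg α)⁻¹ = FreeGroup.mk (FreeGroup.invRev [((none : Option α), true)]) from FreeGroup.inv_mk]
          rfl
        | false =>
          have : FreeGroup.mk [((none : Option α), false)] = (xg α)⁻¹ := by
            rw [show (xg α)⁻¹ = FreeGroup.mk (FreeGroup.invRev [((none : Option α), true)]) from FreeGroup.inv_mk]
            rfl
          rw [this, _root_.map_inv, rhom_x, inv_inv]
          rfl
      | some y =>
        cases b with
        | true =>
          have h2 : FreeGroup.mk [((some y : Option α), true)] = FreeGroup.of (some y) := rfl
          rw [h2, rhom_some]; rfl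
        | false =>
          have : FreeGroup.mk [((some y : Option α), false)] = (FreeGroup.of (some y))⁻¹ := by
            rw [show (FreeGroup.of (some y : Option α))⁻¹ = FreeGroup.mk (FreeGroup.invRev [((some y : Option α), true)]) from FreeGroup.inv_mk]
            rfl
          rw [this, _root_.map_inv, rhom_some, ← this]; rfl
    rw [h1, FreeGroup.mul_mk]
    rfl


theorem mem_head?_mem {L : List (α × Bool)} {y : α × Bool} (hy : y ∈ L.head?) : y ∈ L := by
  cases L with
  | nil => simp at hy
  | cons a t => simp at hy; rw [hy]; exact List.mem_cons_self

theorem mem_getLast?_mem {L : List (α × Bool)} {y : α × Bool} (hy : y ∈ L.getLast?) : y ∈ L :=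
  List.mem_of_mem_getLast? hy

theorem toWord_mul_of_seam {g w : FreeGroup α}
    (hseam : ∀ x ∈ g.toWord.getLast?, ∀ y ∈ w.toWord.head?, NC x y) :
    (g * w).toWord = g.toWord ++ w.toWord := by
  apply toWord_mul_of_chain'
  unfold List.Chain'
  rw [List.isChain_append]
  exact ⟨chain'_toWord g, chain'_toWord w, hseam⟩

theorem toWord_rhom (g : FreeGroup (Option α)) :
    (rhom α g).toWord = g.toWord.map mflip := by
  conv_lhs => rw [← FreeGroup.mk_toWord (x := g)]
  rw [rhom_mk, FreeGroup.toWord_mk]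
  apply reduce_eq_self_of_chain'
  have h := chain'_toWord g
  have : ∀ a b : Option α × Bool, NC a b → NC (mflip a) (mflip b) := by
    intro a b hab
    simp only [NC, mflip_fst] at *
    intro ⟨h1, h2⟩
    apply hab
    refine ⟨h1, ?_⟩
    rcases a with ⟨a1, a2⟩; rcases b with ⟨b1, b2⟩
    simp only at h1 ⊢
    subst h1
    cases a1 <;> simp_all
  exact (List.isChain_map mflip).2 (List.IsChain.imp this h)

/-- signed run of x-letters -/
def zrun (k : ℤ) : List (Option α × Bool) := List.replicate k.natAbs ((none : Option α), decide (0 < k))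

theorem zrun_chain' (k : ℤ) : List.Chain' NC (zrun (α := α) k) := by
  apply List.isChain_replicate_of_rel
  simp [NC]

theorem mk_zrun (k : ℤ) : FreeGroup.mk (zrun (α := α) k) = (xg α) ^ k := by
  rcases lt_trichotomy k 0 with h | h | h
  · have hk : k.natAbs = (-k).toNat := by omega
    have hb : decide (0 < k) = false := by simp; omega
    rw [zrun, hb, hk]
    have : FreeGroup.mk (List.replicate (-k).toNat ((none : Option α), false)) = ((xg α)⁻¹) ^ (-k).toNat := by
      induction (-k).toNat with
      | zero => simp [FreeGroup.one_eq_mk]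
      | succ n ih =>
        rw [List.replicate_succ, show ((none : Option α), false) :: List.replicate n ((none : Option α), false) = [((none : Option α), false)] ++ List.replicate n ((none:Option α), false) from rfl, ← FreeGroup.mul_mk, ih, pow_succ']
        congr 1
    rw [this, inv_pow, ← zpow_natCast, ← zpow_neg]
    congr 1
    omega
  · subst h; simp [zrun, FreeGroup.one_eq_mk]
  · have hk : k.natAbs = k.toNat := by omega
    have hb : decide (0 < k) = true := by simpa using h
    rw [zrun, hb, hk]
    have : FreeGroup.mk (List.replicate k.toNat ((none : Option α), true)) = (xg α) ^ k.toNat := by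
      induction k.toNat with
      | zero => simp [FreeGroup.one_eq_mk]
      | succ n ih =>
        rw [List.replicate_succ, show ((none : Option α), true) :: List.replicate n ((none : Option α), true) = [((none : Option α), true)] ++ List.replicate n ((none:Option α), true) from rfl, ← FreeGroup.mul_mk, ih, pow_succ']
        rfl
    rw [this, ← zpow_natCast]
    congr 1
    omega

theorem toWord_zpow_x (k : ℤ) : ((xg α) ^ k).toWord = zrun k := by
  rw [← mk_zrun, FreeGroup.toWord_mk, reduce_eq_self_of_chain' (zrun_chain' k)]

theorem zrun_injective (k k' : ℤ) (h : zrun (α := α) k = zrun k') : k = k' := by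
  have hlen : k.natAbs = k'.natAbs := by
    have := congrArg List.length h; simpa [zrun] using this
  rcases Nat.eq_zero_or_pos k.natAbs with h0 | hpos
  · omega
  · have hmem : ((none : Option α), decide (0 < k)) ∈ zrun (α := α) k' := by
      rw [← h]
      exact List.mem_replicate.2 ⟨by omega, rfl⟩
    have hpair := (List.mem_replicate.1 hmem).2
    have hb : decide (0 < k) = decide (0 < k') := congrArg Prod.snd hpair
    by_cases hk : 0 < k <;> by_cases hk' : 0 < k' <;> simp [hk, hk'] at hb <;> omega

theorem x_zpow_injective (k k' : ℤ) (h : (xg α) ^ k = (xg α) ^ k') : k = k' := by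
  apply zrun_injective (α := α)
  rw [← toWord_zpow_x, ← toWord_zpow_x, h]

variable (α) in
def Hsub : Subgroup (FreeGroup (Option α)) :=
  Subgroup.closure (Set.range (fun y : α => FreeGroup.of (some y)))

def NF (L : List (Option α × Bool)) : Prop := ∀ l ∈ L, l.1 ≠ none

def noneCount (L : List (Option α × Bool)) : ℕ := L.countP (fun l => l.1.isNone)

theorem noneCount_append (L₁ L₂ : List (Option α × Bool)) :
    noneCount (L₁ ++ L₂) = noneCount L₁ + noneCount L₂ := List.countP_append

theorem noneCount_eq_zero_iff (L : List (Option α × Bool)) : noneCount L = 0 ↔ NF L := by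
  rw [noneCount, List.countP_eq_zero]
  constructor
  · intro h l hl; have := h l hl; simpa using this
  · intro h l hl; have := h l hl; simpa using this

theorem noneCount_invRev (L : List (Option α × Bool)) : noneCount (FreeGroup.invRev L) = noneCount L := by
  rw [FreeGroup.invRev, noneCount, noneCount, List.countP_reverse, List.countP_map]
  rfl

theorem noneCount_map_mflip (L : List (Option α × Bool)) : noneCount (L.map mflip) = noneCount L := by
  rw [noneCount, noneCount, List.countP_map]
  congr 1
  funext l
  simp [Function.comp, mflip_fst]

theorem mem_H_of_NF {L : List (Option α × Bool)} (h : NF L) : FreeGroup.mk L ∈ Hsub α := by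
  induction L with
  | nil => rw [show FreeGroup.mk ([] : List (Option α × Bool)) = 1 from FreeGroup.one_eq_mk.symm]; exact one_mem _
  | cons l L ih =>
    rw [show FreeGroup.mk (l :: L) = FreeGroup.mk [l] * FreeGroup.mk L by rw [FreeGroup.mul_mk]; rfl]
    refine mul_mem ?_ (ih (fun t ht => h t (List.mem_cons_of_mem _ ht)))
    rcases l with ⟨a, b⟩
    have ha := h (a, b) (List.mem_cons_self)
    cases a with
    | none => exact absurd rfl ha
    | some y =>
      cases b with
      | true =>
        exact Subgroup.subset_closure ⟨y, rfl⟩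
      | false =>
        have : FreeGroup.mk [((some y : Option α), false)] = (FreeGroup.of (some y))⁻¹ := by
          rw [show (FreeGroup.of (some y : Option α))⁻¹ = FreeGroup.mk (FreeGroup.invRev [((some y : Option α), true)]) from FreeGroup.inv_mk]
          rfl
        rw [this]
        exact inv_mem (Subgroup.subset_closure ⟨y, rfl⟩)

theorem NF_toWord_of_mem_H {g : FreeGroup (Option α)} (h : g ∈ Hsub α) : NF g.toWord := by
  induction h using Subgroup.closure_induction with
  | mem g hg =>
    obtain ⟨y, rfl⟩ := hg
    rw [FreeGroup.toWord_of]
    intro l hl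
    simp at hl
    subst hl
    simp
  | one => rw [FreeGroup.toWord_one]; intro l hl; simp at hl
  | mul g₁ g₂ _ _ ih1 ih2 =>
    intro l hl
    have := (FreeGroup.toWord_mul_sublist g₁ g₂).mem hl
    rcases List.mem_append.1 this with h' | h'
    · exact ih1 l h'
    · exact ih2 l h'
  | inv g _ ih =>
    intro l hl
    rw [FreeGroup.toWord_inv, FreeGroup.invRev] at hl
    rw [List.mem_reverse] at hl
    obtain ⟨l', hl', rfl⟩ := List.mem_map.1 hl
    exact ih l' hl'

theorem mem_H_iff {g : FreeGroup (Option α)} : g ∈ Hsub α ↔ NF g.toWord := by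
  constructor
  · exact NF_toWord_of_mem_H
  · intro h
    have := mem_H_of_NF h
    rwa [FreeGroup.mk_toWord] at this

theorem rhom_fixes_H {g : FreeGroup (Option α)} (h : g ∈ Hsub α) : rhom α g = g := by
  induction h using Subgroup.closure_induction with
  | mem g hg => obtain ⟨y, rfl⟩ := hg; exact rhom_some y
  | one => simp
  | mul g₁ g₂ _ _ ih1 ih2 => rw [_root_.map_mul, ih1, ih2]
  | inv g _ ih => rw [_root_.map_inv, ih]

theorem map_eq_self_forall {L : List (Option α × Bool)} (h : L.map mflip = L) :
    ∀ l ∈ L, mflip l = l := by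
  induction L with
  | nil => intro l hl; simp at hl
  | cons a L ih =>
    simp only [List.map_cons, List.cons.injEq] at h
    intro l hl
    rcases List.mem_cons.1 hl with rfl | hl'
    · exact h.1
    · exact ih h.2 l hl'

theorem mem_H_of_rhom_fix {g : FreeGroup (Option α)} (h : rhom α g = g) : g ∈ Hsub α := by
  rw [mem_H_iff]
  have hw : g.toWord.map mflip = g.toWord := by
    rw [← toWord_rhom, h]
  intro l hl
  have := map_eq_self_forall hw l hl
  rcases l with ⟨a, b⟩
  cases a with
  | none => simp at this
  | some y => simp

theorem rhom_eq_self_iff {g : FreeGroup (Option α)} : rhom α g = g ↔ g ∈ Hsub α :=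
  ⟨mem_H_of_rhom_fix, rhom_fixes_H⟩

def invf (l : Option α × Bool) : Option α × Bool := (l.1, !l.2)

theorem invRev_eq (L : List (Option α × Bool)) : FreeGroup.invRev L = (L.map invf).reverse := rfl

theorem mk_single_some_neg (y : α) (b : Bool) :
    FreeGroup.mk [((some y : Option α), !b)] = (FreeGroup.mk [((some y : Option α), b)])⁻¹ := by
  rw [FreeGroup.inv_mk]
  cases b <;> rfl

theorem rhom_single_some (y : α) (b : Bool) :
    rhom α (FreeGroup.mk [((some y : Option α), b)]) = FreeGroup.mk [((some y : Option α), b)] := by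
  rw [rhom_mk]; rfl

theorem rhom_single_none (b : Bool) :
    rhom α (FreeGroup.mk [((none : Option α), b)]) = (FreeGroup.mk [((none : Option α), b)])⁻¹ := by
  rw [rhom_mk, FreeGroup.inv_mk]
  cases b <;> rfl

theorem antipalindrome_decomp_aux : ∀ (n : ℕ) (L : List (Option α × Bool)), L.length ≤ n →
    L.map mflip = FreeGroup.invRev L →
    ∃ (C : List (Option α × Bool)) (k : ℤ),
      FreeGroup.mk L = FreeGroup.mk C * (xg α) ^ k * (rhom α (FreeGroup.mk C))⁻¹ ∧
      noneCount L = k.natAbs + 2 * noneCount C := by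
  intro n
  induction n with
  | zero =>
    intro L hL _
    have : L = [] := List.length_eq_zero_iff.1 (Nat.le_zero.1 hL)
    subst this
    refine ⟨[], 0, ?_, by simp [noneCount]⟩
    simp [show FreeGroup.mk ([] : List (Option α × Bool)) = 1 from FreeGroup.one_eq_mk.symm]
  | succ n ih =>
    intro L hL hpal
    rcases L with _ | ⟨l₁, T⟩
    · refine ⟨[], 0, ?_, by simp [noneCount]⟩
      simp [show FreeGroup.mk ([] : List (Option α × Bool)) = 1 from FreeGroup.one_eq_mk.symm]
    rcases (List.eq_nil_or_concat T) with rfl | ⟨M, l₂, rfl⟩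
    · -- single letter
      rw [invRev_eq] at hpal
      simp only [List.map_cons, List.map_nil, List.reverse_cons, List.reverse_nil,
        List.nil_append] at hpal
      have hl : mflip l₁ = invf l₁ := List.head_eq_of_cons_eq hpal
      rcases l₁ with ⟨a, b⟩
      cases a with
      | some y => simp [mflip, invf] at hl
      | none =>
        refine ⟨[], if b then 1 else -1, ?_, ?_⟩
        · have : FreeGroup.mk [((none : Option α), b)] = (xg α) ^ (if b then (1:ℤ) else -1) := by
            rw [← mk_zrun]
            cases b <;> rfl
          simp only [this]
          rw [show FreeGroup.mk ([] : List (Option α × Bool)) = 1 from FreeGroup.one_eq_mk.symm]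
          simp
        · cases b <;> simp [noneCount]
    · -- length ≥ 2 : L = l₁ :: M ++ [l₂]
      simp only [List.concat_eq_append] at hL hpal ⊢
      rw [invRev_eq] at hpal
      simp only [List.map_cons, List.map_append, List.map_cons, List.map_nil,
        List.reverse_cons, List.reverse_append, List.reverse_nil, List.nil_append] at hpal
      -- hpal : mflip l₁ :: (map mflip M ++ [mflip l₂]) = invf l₂ :: ((map invf M).reverse ++ [invf l₁])
      have h1 : mflip l₁ = invf l₂ := List.head_eq_of_cons_eq hpal
      have h2 : List.map mflip M ++ [mflip l₂] = (List.map invf M).reverse ++ [invf l₁] :=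
        List.tail_eq_of_cons_eq hpal
      have h3 : List.map mflip M = (List.map invf M).reverse := by
        have hlen : (List.map mflip M).length = ((List.map invf M).reverse).length := by simp
        exact (List.append_inj' h2 (by simp)).1
      have hM : List.map mflip M = FreeGroup.invRev M := by rw [invRev_eq]; exact h3
      have hMlen : M.length ≤ n := by
        have := hL
        simp only [List.length_cons, List.length_append, List.length_cons, List.length_nil] at this
        omega
      obtain ⟨C', k, hC', hcount⟩ := ih M hMlen hM
      have hsplit : FreeGroup.mk (l₁ :: (M ++ [l₂])) =
          FreeGroup.mk [l₁] * FreeGroup.mk M * FreeGroup.mk [l₂] := by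
        rw [FreeGroup.mul_mk, FreeGroup.mul_mk]; rfl
      rcases l₂ with ⟨a, b⟩
      cases a with
      | some y =>
        have hl₁ : l₁ = ((some y : Option α), !b) := by
          rcases l₁ with ⟨a', b'⟩
          cases a' with
          | none => simp [mflip, invf] at h1
          | some y' =>
            simp only [mflip_some, invf] at h1
            rw [h1]
        subst hl₁
        refine ⟨((some y : Option α), !b) :: C', k, ?_, ?_⟩
        · have hmkC : FreeGroup.mk (((some y : Option α), !b) :: C') =
              FreeGroup.mk [((some y : Option α), !b)] * FreeGroup.mk C' := by
            rw [FreeGroup.mul_mk]; rfl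
          rw [hsplit, hmkC, hC']
          rw [_root_.map_mul, mul_inv_rev]
          rw [show rhom α (FreeGroup.mk [((some y : Option α), !b)]) = FreeGroup.mk [((some y : Option α), !b)] from rhom_single_some y (!b)]
          rw [mk_single_some_neg y b]
          group
        · have e1 : noneCount (((some y : Option α), !b) :: (M ++ [((some y : Option α), b)])) = noneCount M := by
            simp [noneCount, List.countP_cons, List.countP_append]
          have e2 : noneCount (((some y : Option α), !b) :: C') = noneCount C' := by
            simp [noneCount, List.countP_cons]
          rw [e1, e2]
          exact hcount
      | none =>
        have hl₁ : l₁ = ((none : Option α), b) := by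
          rcases l₁ with ⟨a', b'⟩
          cases a' with
          | some y' => simp [mflip, invf] at h1
          | none =>
            simp only [mflip_none, invf] at h1
            have hbb : (!b') = !b := by
              simpa only [mflip_none, invf, Prod.mk.injEq, true_and] using h1
            have hb2 : b' = b := Bool.not_inj hbb
            rw [hb2]
        subst hl₁
        refine ⟨((none : Option α), b) :: C', k, ?_, ?_⟩
        · have hmkC : FreeGroup.mk (((none : Option α), b) :: C') =
              FreeGroup.mk [((none : Option α), b)] * FreeGroup.mk C' := by
            rw [FreeGroup.mul_mk]; rfl
          rw [hsplit, hmkC, hC']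
          rw [_root_.map_mul, mul_inv_rev]
          rw [rhom_single_none b]
          group
        · have e1 : noneCount (((none : Option α), b) :: (M ++ [((none : Option α), b)])) = noneCount M + 2 := by
            simp [noneCount, List.countP_cons, List.countP_append]
          have e2 : noneCount (((none : Option α), b) :: C') = noneCount C' + 1 := by
            simp [noneCount, List.countP_cons]
          rw [e1, e2]
          omega

theorem antipalindrome_decomp {g : FreeGroup (Option α)} (h : rhom α g = g⁻¹) :
    ∃ (C : List (Option α × Bool)) (k : ℤ),
      g = FreeGroup.mk C * (xg α) ^ k * (rhom α (FreeGroup.mk C))⁻¹ ∧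
      noneCount g.toWord = k.natAbs + 2 * noneCount C := by
  have hw : g.toWord.map mflip = FreeGroup.invRev g.toWord := by
    rw [← toWord_rhom, ← FreeGroup.toWord_inv, h]
  obtain ⟨C, k, h1, h2⟩ := antipalindrome_decomp_aux g.toWord.length g.toWord le_rfl hw
  rw [FreeGroup.mk_toWord] at h1
  exact ⟨C, k, h1, h2⟩

theorem nc_of_ne_fst {a b : Option α × Bool} (h : a.1 ≠ b.1) : NC a b := fun hc => h hc.1

theorem allnone_zrun : ∀ (L : List (Option α × Bool)), List.Chain' NC L →
    (∀ l ∈ L, l.1 = none) → ∃ c : ℤ, L = zrun c := by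
  intro L
  induction L with
  | nil => exact fun _ _ => ⟨0, rfl⟩
  | cons l L ih =>
    intro hch hall
    obtain ⟨c', hc'⟩ := ih hch.tail (fun t ht => hall t (List.mem_cons_of_mem _ ht))
    rcases l with ⟨a, b⟩
    have ha : a = none := hall (a, b) (List.mem_cons_self)
    subst ha
    rcases L with _ | ⟨l₂, L'⟩
    · refine ⟨if b then 1 else -1, ?_⟩
      cases b <;> rfl
    · have hc'ne : zrun (α := α) c' ≠ [] := by rw [← hc']; simp
      have hcne : c' ≠ 0 := by
        intro h0; rw [h0] at hc'ne; simp [zrun] at hc'ne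
      have hhd : l₂ = ((none : Option α), decide (0 < c')) := by
        have : (l₂ :: L').head? = (zrun (α := α) c').head? := by rw [← hc']
        rw [zrun, List.head?_replicate] at this
        simp only [List.head?_cons] at this
        have hna : c'.natAbs ≠ 0 := by omega
        rw [if_neg hna] at this
        exact Option.some_injective _ this
      have hnc : NC ((none : Option α), b) l₂ := (List.isChain_cons_cons.1 hch).1
      rw [hhd] at hnc
      have hnb : ¬ (b = !(decide (0 < c'))) := fun hb => hnc ⟨rfl, hb⟩
      have hb : b = decide (0 < c') := by
        cases b <;> cases hd : decide (0 < c') <;> simp_all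
      refine ⟨if b then c' + 1 else c' - 1, ?_⟩
      have hpos : b = true → 0 < c' := by intro h; rw [h] at hb; simpa using hb.symm
      have hneg : b = false → c' < 0 := by
        intro h; rw [h] at hb
        have : ¬ (0 < c') := by simpa using hb.symm
        omega
      cases b with
      | true =>
        have h1 : 0 < c' := hpos rfl
        simp only [if_pos]
        rw [zrun, show (c' + 1).natAbs = c'.natAbs + 1 by omega, List.replicate_succ]
        rw [show decide (0 < c' + 1) = true by simp; omega]
        rw [hc', zrun, show decide (0 < c') = true by simpa using h1]
      | false =>
        have h1 : c' < 0 := hneg rfl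
        simp only [Bool.false_eq_true, if_false]
        rw [zrun, show (c' - 1).natAbs = c'.natAbs + 1 by omega, List.replicate_succ]
        rw [show decide (0 < c' - 1) = false by simp; omega]
        rw [hc', zrun, show decide (0 < c') = false by simp; omega]

theorem takeWhile_append_all (p : (Option α × Bool) → Bool) (L₁ L₂ : List (Option α × Bool))
    (h₁ : ∀ l ∈ L₁, p l = true) (h₂ : ∀ l ∈ L₂.head?, p l = false) :
    List.takeWhile p (L₁ ++ L₂) = L₁ := by
  induction L₁ with
  | nil =>
    simp only [List.nil_append]
    cases L₂ with
    | nil => rfl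
    | cons a t =>
      have := h₂ a rfl
      exact List.takeWhile_cons_of_neg (by simp [this])
  | cons a t ih =>
    rw [List.cons_append, List.takeWhile_cons_of_pos (h₁ a (List.mem_cons_self))]
    rw [ih (fun l hl => h₁ l (List.mem_cons_of_mem _ hl))]

theorem zrun_all_none (c : ℤ) : ∀ l ∈ zrun (α := α) c, l.1 = none := by
  intro l hl
  rw [zrun] at hl
  rw [(List.mem_replicate.1 hl).2]

theorem chain'_three (p q : ℤ) (M : List (Option α × Bool)) (hch : List.Chain' NC M)
    (hne : M ≠ [])
    (hhd : ∀ l ∈ M.head?, l.1 ≠ none) (hlast : ∀ l ∈ M.getLast?, l.1 ≠ none) :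
    List.Chain' NC (zrun (α := α) p ++ M ++ zrun q) := by
  unfold List.Chain'
  rw [List.append_assoc, List.isChain_append]
  refine ⟨zrun_chain' p, ?_, ?_⟩
  · rw [List.isChain_append]
    refine ⟨hch, zrun_chain' q, ?_⟩
    intro x hx y hy
    apply nc_of_ne_fst
    have hx1 : x.1 ≠ none := hlast x hx
    have hy1 : y.1 = none := zrun_all_none q y (mem_head?_mem hy)
    rw [hy1]; exact hx1
  · intro x hx y hy
    apply nc_of_ne_fst
    have hx1 : x.1 = none := zrun_all_none p x (mem_getLast?_mem hx)
    rw [List.head?_append_of_ne_nil _ hne] at hy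
    have hy1 : y.1 ≠ none := hhd y hy
    rw [hx1]
    exact fun h => hy1 h.symm

theorem comp_toWord (p q : ℤ) (M : List (Option α × Bool)) (hch : List.Chain' NC M)
    (hne : M ≠ [])
    (hhd : ∀ l ∈ M.head?, l.1 ≠ none) (hlast : ∀ l ∈ M.getLast?, l.1 ≠ none) :
    ((xg α) ^ p * FreeGroup.mk M * (xg α) ^ q).toWord = zrun p ++ M ++ zrun q := by
  rw [← mk_zrun p, ← mk_zrun q, FreeGroup.mul_mk, FreeGroup.mul_mk, FreeGroup.toWord_mk]
  exact reduce_eq_self_of_chain' (chain'_three p q M hch hne hhd hlast)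

theorem rhom_zpow_x (a : ℤ) : rhom α ((xg α) ^ a) = (xg α) ^ (-a) := by
  rw [map_zpow, rhom_x, zpow_neg, inv_zpow]

theorem odd_conj_fix {k : ℤ} (hk : Odd k) {g : FreeGroup (Option α)}
    (h : (xg α) ^ k * rhom α g * (xg α) ^ (-k) = g) : g = 1 := by
  classical
  set W := g.toWord with hW
  by_cases hall : ∀ l ∈ W, l.1 = none
  · -- g is a power of x
    obtain ⟨a, ha⟩ := allnone_zrun W (chain'_toWord g) hall
    have hg : g = (xg α) ^ a := by
      rw [← FreeGroup.mk_toWord (x := g), ← hW, ha, mk_zrun]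
    rw [hg, rhom_zpow_x] at h
    have : (xg α) ^ (k + -a + -k) = (xg α) ^ a := by
      rw [zpow_add, zpow_add]; exact h
    have := x_zpow_injective _ _ this
    have ha0 : a = 0 := by omega
    rw [hg, ha0, zpow_zero]
  · -- W = zrun a ++ M ++ zrun b with M nonempty, some-boundaries
    set pnone : (Option α × Bool) → Bool := fun l => l.1.isNone with hpnone
    set A := W.takeWhile pnone with hA
    set R := W.dropWhile pnone with hR
    have hWAR : A ++ R = W := List.takeWhile_append_dropWhile
    have hRne : R ≠ [] := by
      intro h0
      apply hall
      intro l hl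
      have : l ∈ A := by rw [← hWAR, h0, List.append_nil] at hl; exact hl
      have := List.mem_takeWhile_imp this
      simpa [hpnone, Option.isNone_iff_eq_none] using this
    set B' := R.reverse.takeWhile pnone with hB'
    set Mr := R.reverse.dropWhile pnone with hMr
    have hRrev : B' ++ Mr = R.reverse := List.takeWhile_append_dropWhile
    set M := Mr.reverse with hM
    set B := B'.reverse with hB
    have hRMB : R = M ++ B := by
      rw [hM, hB, ← List.reverse_append, hRrev, List.reverse_reverse]
    have hWdecomp : W = A ++ M ++ B := by rw [List.append_assoc, ← hRMB, hWAR]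
    -- R's head fails pnone
    have hRhd : ∀ l ∈ R.head?, l.1 ≠ none := by
      intro l hl
      have := List.head?_dropWhile_not pnone W
      rw [← hR] at this
      cases hRh : R.head? with
      | none => rw [hRh] at hl; simp at hl
      | some a =>
        rw [hRh] at this hl
        simp only [Option.mem_def, Option.some.injEq] at hl
        subst hl
        intro hceq
        rw [hpnone] at this
        simp only at this
        rw [hceq] at this
        simp at this
    have hMne : M ≠ [] := by
      intro h0
      have hMr0 : Mr = [] := by
        have := congrArg List.reverse h0
        rw [hM, List.reverse_reverse] at this
        simpa using this
      have hallR : ∀ l ∈ R.reverse, pnone l = true := by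
        rw [hMr] at hMr0
        exact fun l hl => List.dropWhile_eq_nil_iff.1 hMr0 l hl
      have hrh : R.head hRne ∈ R.head? := by
        rw [List.head?_eq_head hRne]
        rfl
      set rh := R.head hRne with hrhdef
      have h1 := hRhd rh hrh
      have h2 : pnone rh = true := hallR rh (List.mem_reverse.2 (mem_head?_mem hrh))
      rw [hpnone] at h2
      simp only [Option.isNone_iff_eq_none] at h2
      exact h1 h2
    have hMhd : ∀ l ∈ M.head?, l.1 ≠ none := by
      intro l hl
      have heq : M.head? = R.head? := by
        rw [hRMB, List.head?_append_of_ne_nil _ hMne]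
      exact hRhd l (heq ▸ hl)
    have hMlast : ∀ l ∈ M.getLast?, l.1 ≠ none := by
      intro l hl
      have h1 : M.getLast? = Mr.head? := by
        rw [hM, List.getLast?_reverse]
      have h2 := List.head?_dropWhile_not pnone R.reverse
      rw [← hMr] at h2
      rw [h1] at hl
      cases hMh : Mr.head? with
      | none => rw [hMh] at hl; simp at hl
      | some a =>
        rw [hMh] at h2 hl
        simp only [Option.mem_def, Option.some.injEq] at hl
        subst hl
        intro hceq
        rw [hpnone] at h2
        simp only at h2
        rw [hceq] at h2
        simp at h2
    have hchW : List.Chain' NC W := chain'_toWord g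
    have hAnone : ∀ l ∈ A, l.1 = none := by
      intro l hl
      have := List.mem_takeWhile_imp (p := pnone) (l := W) (by rw [← hA]; exact hl)
      simpa [hpnone, Option.isNone_iff_eq_none] using this
    have hAchain : List.Chain' NC A := hchW.prefix (by rw [hA]; exact List.takeWhile_prefix pnone)
    obtain ⟨a, hAa⟩ := allnone_zrun A hAchain hAnone
    have hBnone : ∀ l ∈ B, l.1 = none := by
      intro l hl
      rw [hB, List.mem_reverse] at hl
      have := List.mem_takeWhile_imp (p := pnone) (l := R.reverse) (by rw [← hB']; exact hl)
      simpa [hpnone, Option.isNone_iff_eq_none] using this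
    have hBchain : List.Chain' NC B := hchW.suffix ⟨A ++ M, by rw [← hWdecomp]⟩
    obtain ⟨b, hBb⟩ := allnone_zrun B hBchain hBnone
    have hMchain : List.Chain' NC M := hchW.infix ⟨A, B, by rw [← hWdecomp]⟩
    set m := FreeGroup.mk M with hm
    have hmW : m.toWord = M := by
      rw [hm, FreeGroup.toWord_mk, reduce_eq_self_of_chain' hMchain]
    have hgdec : g = (xg α) ^ a * m * (xg α) ^ b := by
      rw [← mk_zrun, ← mk_zrun, hm, FreeGroup.mul_mk, FreeGroup.mul_mk]
      rw [← hAa, ← hBb, List.append_assoc, ← hRMB, hWAR, hW, FreeGroup.mk_toWord]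
    have hrg : rhom α g = (xg α) ^ (-a) * FreeGroup.mk (M.map mflip) * (xg α) ^ (-b) := by
      rw [hgdec, _root_.map_mul, _root_.map_mul, rhom_zpow_x, rhom_zpow_x, hm, rhom_mk]
    have hlhs : (xg α) ^ k * rhom α g * (xg α) ^ (-k) =
        (xg α) ^ (k + -a) * FreeGroup.mk (M.map mflip) * (xg α) ^ (-b + -k) := by
      rw [hrg, zpow_add, zpow_add]
      group
    -- boundaries of mapped list
    have hmapne : M.map mflip ≠ [] := by simpa using hMne
    have hmaphd : ∀ l ∈ (M.map mflip).head?, l.1 ≠ none := by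
      intro l hl
      rw [List.head?_map] at hl
      cases hMh : M.head? with
      | none => rw [hMh] at hl; simp at hl
      | some c =>
        rw [hMh] at hl
        simp only [Option.map_some, Option.mem_def, Option.some.injEq] at hl
        subst hl
        rw [mflip_fst]
        exact hMhd c (by rw [hMh]; rfl)
    have hmaplast : ∀ l ∈ (M.map mflip).getLast?, l.1 ≠ none := by
      intro l hl
      rw [List.getLast?_map] at hl
      cases hMh : M.getLast? with
      | none => rw [hMh] at hl; simp at hl
      | some c =>
        rw [hMh] at hl
        simp only [Option.map_some, Option.mem_def, Option.some.injEq] at hl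
        subst hl
        rw [mflip_fst]
        exact hMlast c (by rw [hMh]; rfl)
    have hmapchain : List.Chain' NC (M.map mflip) := by
      have himp : ∀ x y : Option α × Bool, NC x y → NC (mflip x) (mflip y) := by
        intro x y hxy
        simp only [NC, mflip_fst] at *
        intro ⟨h1, h2⟩
        apply hxy
        refine ⟨h1, ?_⟩
        rcases x with ⟨x1, x2⟩; rcases y with ⟨y1, y2⟩
        simp only at h1 ⊢
        subst h1
        cases x1 <;> simpa using h2
      exact (List.isChain_map mflip).2 (List.IsChain.imp himp hMchain)
    have hlw : ((xg α) ^ (k + -a) * FreeGroup.mk (M.map mflip) * (xg α) ^ (-b + -k)).toWord =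
        zrun (k + -a) ++ M.map mflip ++ zrun (-b + -k) :=
      comp_toWord _ _ _ hmapchain hmapne hmaphd hmaplast
    have hrw : g.toWord = zrun a ++ M ++ zrun b := by
      rw [← hW, hWdecomp, hAa, hBb]
    have hweq : zrun (k + -a) ++ M.map mflip ++ zrun (-b + -k) = zrun (α := α) a ++ M ++ zrun b := by
      rw [← hlw, ← hrw, ← hlhs, h]
    -- takeWhile both sides
    have htw : zrun (α := α) (k + -a) = zrun (α := α) a := by
      have h1 : List.takeWhile pnone (zrun (α := α) (k + -a) ++ (M.map mflip ++ zrun (-b + -k))) = zrun (k + -a) := by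
        apply takeWhile_append_all
        · intro l hl
          rw [hpnone]
          simp [zrun_all_none _ l hl]
        · intro l hl
          rw [List.head?_append_of_ne_nil _ hmapne] at hl
          have hne' := hmaphd l hl
          rw [hpnone]
          exact Bool.eq_false_iff.2 (fun hb => hne' (Option.isNone_iff_eq_none.1 hb))
      have h2 : List.takeWhile pnone (zrun (α := α) a ++ (M ++ zrun b)) = zrun a := by
        apply takeWhile_append_all
        · intro l hl
          rw [hpnone]
          simp [zrun_all_none _ l hl]
        · intro l hl
          rw [List.head?_append_of_ne_nil _ hMne] at hl
          have hne' := hMhd l hl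
          rw [hpnone]
          exact Bool.eq_false_iff.2 (fun hb => hne' (Option.isNone_iff_eq_none.1 hb))
      rw [← h1, ← h2]
      congr 1
      rw [← List.append_assoc, ← List.append_assoc]
      exact hweq
    have := zrun_injective _ _ htw
    obtain ⟨j, hj⟩ := hk
    omega

theorem NF_ne_none {L : List (Option α × Bool)} (h : NF L) {l : Option α × Bool} (hl : l ∈ L) :
    l.1 ≠ none := h l hl

/-- map mflip fixes none-free lists -/
theorem map_mflip_of_NF {L : List (Option α × Bool)} (h : NF L) : L.map mflip = L := by
  induction L with
  | nil => rfl
  | cons l t ih =>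
    rw [List.map_cons, ih (fun a ha => h a (List.mem_cons_of_mem _ ha))]
    congr 1
    rcases l with ⟨a, c⟩
    cases a with
    | none => exact absurd rfl (h _ (List.mem_cons_self))
    | some y => rfl

theorem invRev_append (L₁ L₂ : List (Option α × Bool)) :
    FreeGroup.invRev (L₁ ++ L₂) = FreeGroup.invRev L₂ ++ FreeGroup.invRev L₁ := by
  simp [FreeGroup.invRev]

theorem NF_invRev {L : List (Option α × Bool)} (h : NF L) : NF (FreeGroup.invRev L) := by
  intro l hl
  rw [FreeGroup.invRev, List.mem_reverse] at hl
  obtain ⟨l', hl', rfl⟩ := List.mem_map.1 hl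
  exact h l' hl'

theorem noneCount_pos_of_not_NF {L : List (Option α × Bool)} (h : ¬ NF L) : 1 ≤ noneCount L := by
  by_contra hc
  push_neg at hc
  interval_cases h' : noneCount L
  · exact h ((noneCount_eq_zero_iff L).1 h')

/-- strip the none-free prefix (and its mirror suffix) off an anti-palindrome -/
theorem strip_aux : ∀ (n : ℕ) (L : List (Option α × Bool)), L.length ≤ n →
    L.map mflip = FreeGroup.invRev L → 1 ≤ noneCount L →
    ∃ (P core : List (Option α × Bool)) (b : Bool),
      L = P ++ core ++ FreeGroup.invRev P ∧ NF P ∧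
      core.map mflip = FreeGroup.invRev core ∧ noneCount core = noneCount L ∧
      core.head? = some ((none : Option α), b) ∧ core.getLast? = some ((none : Option α), b) := by
  intro n
  induction n with
  | zero =>
    intro L hL _ hcnt
    have : L = [] := List.length_eq_zero_iff.1 (Nat.le_zero.1 hL)
    subst this
    simp [noneCount] at hcnt
  | succ n ih =>
    intro L hL hpal hcnt
    rcases L with _ | ⟨l₁, T⟩
    · simp [noneCount] at hcnt
    rcases (List.eq_nil_or_concat T) with rfl | ⟨M, l₂, rfl⟩
    · -- singleton
      rcases l₁ with ⟨a, c⟩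
      cases a with
      | some y =>
        simp [noneCount] at hcnt
      | none =>
        exact ⟨[], [((none : Option α), c)], c, by simp [FreeGroup.invRev], by intro l hl; simp at hl,
          hpal, rfl, rfl, rfl⟩
    · simp only [List.concat_eq_append] at hL hpal hcnt ⊢
      rw [invRev_eq] at hpal
      simp only [List.map_cons, List.map_append, List.map_cons, List.map_nil,
        List.reverse_cons, List.reverse_append, List.reverse_nil, List.nil_append] at hpal
      have h1 : mflip l₁ = invf l₂ := List.head_eq_of_cons_eq hpal
      have h2 : List.map mflip M ++ [mflip l₂] = (List.map invf M).reverse ++ [invf l₁] :=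
        List.tail_eq_of_cons_eq hpal
      have h3 : List.map mflip M = (List.map invf M).reverse :=
        (List.append_inj' h2 (by simp)).1
      have hM : List.map mflip M = FreeGroup.invRev M := h3
      rcases l₁ with ⟨a, c⟩
      cases a with
      | none =>
        -- core is the whole thing
        have hl₂ : l₂ = ((none : Option α), c) := by
          rcases l₂ with ⟨a', c'⟩
          cases a' with
          | some y' => simp [mflip, invf] at h1
          | none =>
            have : (!c) = !c' := by simpa [mflip, invf, Prod.ext_iff] using h1
            rw [Bool.not_inj this]
        subst hl₂
        refine ⟨[], ((none : Option α), c) :: (M ++ [((none : Option α), c)]), c,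
          by simp [FreeGroup.invRev], by intro l hl; simp at hl, ?_, rfl, rfl, ?_⟩
        · rw [invRev_eq]
          simpa using hpal
        · rw [List.getLast?_cons, List.getLast?_concat]
          simp
      | some y =>
        have hl₂ : l₂ = ((some y : Option α), !c) := by
          rcases l₂ with ⟨a', c'⟩
          cases a' with
          | none => simp [mflip, invf, Prod.ext_iff] at h1
          | some y' =>
            have h1' : ((some y : Option α), c) = ((some y' : Option α), !c') := by
              simpa [invf] using h1
            have hy : (some y : Option α) = some y' := congrArg Prod.fst h1'
            have hcc : c = !c' := congrArg Prod.snd h1'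
            have hc' : c' = !c := by rw [hcc]; simp
            rw [← hy, hc']
        subst hl₂
        have hMlen : M.length ≤ n := by
          simp only [List.length_cons, List.length_append, List.length_cons,
            List.length_nil] at hL
          omega
        have hMcnt : 1 ≤ noneCount M := by
          have : noneCount (((some y : Option α), c) :: (M ++ [((some y : Option α), !c)])) =
              noneCount M := by
            simp [noneCount, List.countP_cons, List.countP_append]
          omega
        obtain ⟨P', core, b, hdec, hNF, hcpal, hccnt, hchd, hclast⟩ := ih M hMlen hM hMcnt
        refine ⟨((some y : Option α), c) :: P', core, b, ?_, ?_, hcpal, ?_, hchd, hclast⟩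
        · rw [hdec]
          rw [show FreeGroup.invRev (((some y : Option α), c) :: P') =
            FreeGroup.invRev P' ++ [((some y : Option α), !c)] by
              rw [show ((some y : Option α), c) :: P' = [((some y : Option α), c)] ++ P' from rfl,
                invRev_append]; rfl]
          simp
        · intro l hl
          rcases List.mem_cons.1 hl with rfl | hl'
          · simp
          · exact hNF l hl'
        · rw [hccnt]
          simp [noneCount, List.countP_cons, List.countP_append]

theorem core_extract {g : FreeGroup (Option α)} (hg : rhom α g = g⁻¹)
    (hcnt : 1 ≤ noneCount g.toWord) :
    ∃ (p m : FreeGroup (Option α)) (core : List (Option α × Bool)) (b : Bool),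
      p ∈ Hsub α ∧ g = p * m * p⁻¹ ∧ m.toWord = core ∧
      core.head? = some ((none : Option α), b) ∧ core.getLast? = some ((none : Option α), b) ∧
      noneCount core = noneCount g.toWord := by
  have hw : g.toWord.map mflip = FreeGroup.invRev g.toWord := by
    rw [← toWord_rhom, ← FreeGroup.toWord_inv, hg]
  obtain ⟨P, core, b, hdec, hNF, hcpal, hccnt, hchd, hclast⟩ :=
    strip_aux g.toWord.length g.toWord le_rfl hw hcnt
  refine ⟨FreeGroup.mk P, FreeGroup.mk core, core, b, mem_H_of_NF hNF, ?_, ?_, hchd, hclast, hccnt⟩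
  · rw [FreeGroup.inv_mk, FreeGroup.mul_mk, FreeGroup.mul_mk, ← hdec, FreeGroup.mk_toWord]
  · rw [FreeGroup.toWord_mk]
    apply reduce_eq_self_of_chain'
    exact (chain'_toWord g).infix ⟨P, FreeGroup.invRev P, by rw [← hdec]⟩

variable (α) in
inductive Str (m : FreeGroup (Option α)) : FreeGroup (Option α) → List Bool → Prop
  | base : ∀ h, h ∈ Hsub α → Str m h []
  | step : ∀ g ds h δ, Str m g ds → h ∈ Hsub α →
      (ds = [] ∨ h ≠ 1 ∨ ds.getLast? = some δ) →
      Str m (g * h * (if δ then m else m⁻¹)) (ds ++ [δ])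

section PingPong

variable {m : FreeGroup (Option α)} {core : List (Option α × Bool)} {b : Bool}

theorem mp_toWord (hcm : m.toWord = core) (δ : Bool) :
    (if δ then m else m⁻¹).toWord = if δ then core else FreeGroup.invRev core := by
  cases δ with
  | true => simpa using hcm
  | false => simp [FreeGroup.toWord_inv, hcm]

theorem invRev_head? (hlast : core.getLast? = some ((none : Option α), b)) :
    (FreeGroup.invRev core).head? = some ((none : Option α), !b) := by
  rw [FreeGroup.invRev, List.head?_reverse, List.getLast?_map, hlast]
  rfl

theorem invRev_getLast? (hhd : core.head? = some ((none : Option α), b)) :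
    (FreeGroup.invRev core).getLast? = some ((none : Option α), !b) := by
  rw [FreeGroup.invRev, List.getLast?_reverse, List.head?_map, hhd]
  rfl

theorem mp_head? (hcm : m.toWord = core) (hhd : core.head? = some ((none : Option α), b))
    (hlast : core.getLast? = some ((none : Option α), b)) (δ : Bool) :
    ((if δ then m else m⁻¹).toWord).head? = some ((none : Option α), if δ then b else !b) := by
  rw [mp_toWord hcm]
  cases δ with
  | true => simpa using hhd
  | false => simpa using invRev_head? hlast
theorem mp_getLast? (hcm : m.toWord = core) (hhd : core.head? = some ((none : Option α), b))
    (hlast : core.getLast? = some ((none : Option α), b)) (δ : Bool) :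
    ((if δ then m else m⁻¹).toWord).getLast? = some ((none : Option α), if δ then b else !b) := by
  rw [mp_toWord hcm]
  cases δ with
  | true => simpa using hlast
  | false => simpa using invRev_getLast? hhd

theorem mp_noneCount (hcm : m.toWord = core) (δ : Bool) :
    noneCount ((if δ then m else m⁻¹).toWord) = noneCount core := by
  rw [mp_toWord hcm]
  cases δ with
  | true => simp
  | false => simpa using noneCount_invRev core

theorem str_word (hcm : m.toWord = core) (hhd : core.head? = some ((none : Option α), b))
    (hlast : core.getLast? = some ((none : Option α), b)) :
    ∀ {g : FreeGroup (Option α)} {ds : List Bool}, Str α m g ds →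
    (ds = [] ∧ g ∈ Hsub α) ∨
    (∃ δ', ds.getLast? = some δ' ∧
      g.toWord.getLast? = some ((none : Option α), if δ' then b else !b) ∧
      noneCount g.toWord = ds.length * noneCount core) := by
  intro g ds hstr
  induction hstr with
  | base h hh => exact Or.inl ⟨rfl, hh⟩
  | step g ds h δ hstr hh hok ih =>
    right
    refine ⟨δ, by rw [List.getLast?_append]; rfl, ?_⟩
    rcases ih with ⟨hds, hgH⟩ | ⟨δ', hds, hgl, hgc⟩
    · -- g ∈ H
      subst hds
      have hgh : g * h ∈ Hsub α := mul_mem hgH hh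
      have hword : (g * h * (if δ then m else m⁻¹)).toWord =
          (g * h).toWord ++ (if δ then m else m⁻¹).toWord := by
        apply toWord_mul_of_seam
        intro x hx y hy
        apply nc_of_ne_fst
        have hx1 : x.1 ≠ none := NF_toWord_of_mem_H hgh x (mem_getLast?_mem hx)
        have hy1 : y.1 = none := by
          rw [mp_head? hcm hhd hlast δ] at hy
          simp only [Option.mem_def, Option.some.injEq] at hy
          rw [← hy]
        rw [hy1]; exact hx1
      constructor
      · rw [hword, List.getLast?_append_of_ne_nil]
        · exact mp_getLast? hcm hhd hlast δ
        · intro h0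
          have := mp_head? hcm hhd hlast δ
          rw [h0] at this; simp at this
      · rw [hword, noneCount_append, mp_noneCount hcm δ]
        have : noneCount (g * h).toWord = 0 :=
          (noneCount_eq_zero_iff _).2 (NF_toWord_of_mem_H hgh)
        simp [this]
    · -- g already has blocks
      have hdsne : ds ≠ [] := by
        intro h0; rw [h0] at hds; simp at hds
      by_cases hone : h = 1
      · -- junction between two m-blocks
        subst hone
        have hδ : δ' = δ := by
          rcases hok with h0 | h0 | h0
          · exact absurd h0 hdsne
          · exact absurd rfl h0
          · rw [hds] at h0; exact Option.some_injective _ h0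
        have hgl' : g.toWord.getLast? = some ((none : Option α), if δ then b else !b) := by
          rw [← hδ]; exact hgl
        have hword : (g * 1 * (if δ then m else m⁻¹)).toWord =
            g.toWord ++ (if δ then m else m⁻¹).toWord := by
          rw [mul_one]
          apply toWord_mul_of_seam
          intro x hx y hy
          rw [Option.mem_def] at hx hy
          rw [hgl'] at hx
          rw [mp_head? hcm hhd hlast δ] at hy
          cases hx
          cases hy
          intro ⟨_, hcc⟩
          simp at hcc
        constructor
        · rw [hword, List.getLast?_append_of_ne_nil]
          · exact mp_getLast? hcm hhd hlast δ
          · intro h0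
            have := mp_head? hcm hhd hlast δ
            rw [h0] at this; simp at this
        · rw [hword, noneCount_append, mp_noneCount hcm δ, hgc]
          simp [Nat.succ_mul]
      · -- h ≠ 1 separator
        have hhne : h.toWord ≠ [] := by
          intro h0; exact hone (FreeGroup.toWord_eq_nil_iff.1 h0)
        have hword1 : (g * h).toWord = g.toWord ++ h.toWord := by
          apply toWord_mul_of_seam
          intro x hx y hy
          apply nc_of_ne_fst
          rw [Option.mem_def, hgl] at hx
          cases hx
          have hy1 : y.1 ≠ none := NF_toWord_of_mem_H hh y (mem_head?_mem hy)
          exact fun hc => hy1 hc.symm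
        have hword2 : (g * h * (if δ then m else m⁻¹)).toWord =
            (g * h).toWord ++ (if δ then m else m⁻¹).toWord := by
          apply toWord_mul_of_seam
          intro x hx y hy
          apply nc_of_ne_fst
          rw [hword1, List.getLast?_append_of_ne_nil _ hhne] at hx
          have hx1 : x.1 ≠ none := NF_toWord_of_mem_H hh x (mem_getLast?_mem hx)
          have hy1 : y.1 = none := by
            rw [mp_head? hcm hhd hlast δ] at hy
            simp only [Option.mem_def, Option.some.injEq] at hy
            rw [← hy]
          rw [hy1]; exact hx1
        constructor
        · rw [hword2, List.getLast?_append_of_ne_nil]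
          · exact mp_getLast? hcm hhd hlast δ
          · intro h0
            have := mp_head? hcm hhd hlast δ
            rw [h0] at this; simp at this
        · rw [hword2, noneCount_append, mp_noneCount hcm δ, hword1, noneCount_append, hgc]
          have : noneCount h.toWord = 0 :=
            (noneCount_eq_zero_iff _).2 (NF_toWord_of_mem_H hh)
          simp [this, Nat.succ_mul]

theorem str_closure {x : FreeGroup (Option α)}
    (hx : x ∈ Subgroup.closure ((Hsub α : Set (FreeGroup (Option α))) ∪ {m})) :
    ∃ g ds h, Str α m g ds ∧ h ∈ Hsub α ∧ x = g * h := by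
  have hx' : x ∈ Submonoid.closure (((Hsub α : Set (FreeGroup (Option α))) ∪ {m}) ∪
      ((Hsub α : Set (FreeGroup (Option α))) ∪ {m})⁻¹) := by
    rw [← Subgroup.closure_toSubmonoid]
    exact hx
  obtain ⟨l, hl, rfl⟩ := Submonoid.exists_list_of_mem_closure hx'
  clear hx hx'
  induction l using List.reverseRecOn with
  | nil =>
    exact ⟨1, [], 1, Str.base 1 (one_mem _), one_mem _, by simp⟩
  | append_singleton l y ihl =>
    obtain ⟨g, ds, h, hstr, hh, hprod⟩ := ihl (fun z hz => hl z (List.mem_append_left _ hz))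
    have hy := hl y (List.mem_append_right _ (List.mem_singleton_self y))
    rw [List.prod_append, List.prod_singleton, hprod]
    -- now multiply g * h by y
    have hmul_H : ∀ h' ∈ Hsub α, ∃ g' ds' h'', Str α m g' ds' ∧ h'' ∈ Hsub α ∧
        (g * h) * h' = g' * h'' :=
      fun h' hh' => ⟨g, ds, h * h', hstr, mul_mem hh hh', by group⟩
    have hmul_m : ∀ δ : Bool, ∃ g' ds' h'', Str α m g' ds' ∧ h'' ∈ Hsub α ∧
        (g * h) * (if δ then m else m⁻¹) = g' * h'' := by
      intro δ
      by_cases hbad : ds ≠ [] ∧ h = 1 ∧ ds.getLast? = some (!δ)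
      · obtain ⟨hds, hone, hlastds⟩ := hbad
        cases hstr with
        | base h' hh' => exact absurd rfl hds
        | step g'' ds'' h'' δ'' hstr'' hh'' hok'' =>
          have hδ'' : δ'' = !δ := by
            rw [List.getLast?_append] at hlastds
            simpa using hlastds
          subst hδ''
          refine ⟨g'', ds'', h'', hstr'', hh'', ?_⟩
          subst hone
          rw [mul_one]
          cases δ <;> simp <;> group
      · push_neg at hbad
        have hok : ds = [] ∨ h ≠ 1 ∨ ds.getLast? = some δ := by
          by_cases h1 : ds = []
          · exact Or.inl h1
          by_cases h2 : h = 1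
          · right; right
            have h3 := hbad h1 h2
            cases hlq : ds.getLast? with
            | none =>
              exfalso
              rw [List.getLast?_eq_none_iff] at hlq
              exact h1 hlq
            | some δ₀ =>
              rw [hlq] at h3
              have : δ₀ ≠ !δ := fun hc => h3 (by rw [hc])
              have : δ₀ = δ := by
                cases δ <;> cases δ₀ <;> simp_all
              rw [this]
          · exact Or.inr (Or.inl h2)
        exact ⟨g * h * (if δ then m else m⁻¹), ds ++ [δ], 1,
          Str.step g ds h δ hstr hh hok, one_mem _, by group⟩
    rcases hy with hy | hy
    · rcases hy with hy | hy
      · exact hmul_H y hy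
      · rw [Set.mem_singleton_iff] at hy
        subst hy
        simpa using hmul_m true
    · rw [Set.mem_inv] at hy
      rcases hy with hy | hy
      · have : y ∈ Hsub α := by
          simpa using inv_mem (SetLike.mem_coe.1 hy)
        exact hmul_H y this
      · rw [Set.mem_singleton_iff] at hy
        have : y = m⁻¹ := by rw [← hy]; simp
        subst this
        simpa using hmul_m false

end PingPong

theorem xg_toWord : (xg α).toWord = [((none : Option α), true)] := FreeGroup.toWord_of none

theorem xg_not_in_H : xg α ∉ Hsub α := by
  intro h
  have := NF_toWord_of_mem_H h ((none : Option α), true) (by rw [xg_toWord]; exact List.mem_singleton_self _)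
  exact this rfl

theorem noneCount_one_of_generating {g : FreeGroup (Option α)} (hg : rhom α g = g⁻¹)
    (hgen : xg α ∈ Subgroup.closure ((Hsub α : Set (FreeGroup (Option α))) ∪ {g})) :
    noneCount g.toWord = 1 := by
  by_contra hne
  rcases Nat.lt_or_ge (noneCount g.toWord) 1 with h1 | h1
  · -- count 0 : g ∈ H, closure ⊆ H
    have h0 : noneCount g.toWord = 0 := by omega
    have hgH : g ∈ Hsub α := (noneCount_eq_zero_iff _).1 h0 |> mem_H_of_NF ∘ id |> fun _ => by
      rw [mem_H_iff]; exact (noneCount_eq_zero_iff _).1 h0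
    have hsub : Subgroup.closure ((Hsub α : Set (FreeGroup (Option α))) ∪ {g}) ≤ Hsub α := by
      rw [Subgroup.closure_le]
      intro z hz
      rcases hz with hz | hz
      · exact hz
      · rw [Set.mem_singleton_iff] at hz; subst hz; exact hgH
    exact xg_not_in_H (hsub hgen)
  · have h2 : 2 ≤ noneCount g.toWord := by omega
    obtain ⟨p, m, core, b, hpH, hgdec, hcm, hchd, hclast, hccnt⟩ := core_extract hg (by omega)
    have hsub : Subgroup.closure ((Hsub α : Set (FreeGroup (Option α))) ∪ {g}) ≤
        Subgroup.closure ((Hsub α : Set (FreeGroup (Option α))) ∪ {m}) := by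
      rw [Subgroup.closure_le]
      intro z hz
      rcases hz with hz | hz
      · exact Subgroup.subset_closure (Or.inl hz)
      · rw [Set.mem_singleton_iff] at hz
        subst hz
        rw [hgdec]
        have hm : m ∈ Subgroup.closure ((Hsub α : Set (FreeGroup (Option α))) ∪ {m}) :=
          Subgroup.subset_closure (Or.inr rfl)
        have hp : p ∈ Subgroup.closure ((Hsub α : Set (FreeGroup (Option α))) ∪ {m}) :=
          Subgroup.subset_closure (Or.inl hpH)
        exact mul_mem (mul_mem hp hm) (inv_mem hp)
    obtain ⟨g', ds, h, hstr, hh, hx⟩ := str_closure (hsub hgen)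
    rcases str_word hcm hchd hclast hstr with ⟨hds, hgH'⟩ | ⟨δ', hds, hgl, hgc⟩
    · subst hds
      exact xg_not_in_H (α := α) (by rw [hx]; exact mul_mem hgH' hh)
    · have hdsne : ds ≠ [] := by intro h0; rw [h0] at hds; simp at hds
      have hword : (g' * h).toWord = g'.toWord ++ h.toWord := by
        apply toWord_mul_of_seam
        intro x hx' y hy
        apply nc_of_ne_fst
        rw [Option.mem_def, hgl] at hx'
        cases hx'
        have hy1 : y.1 ≠ none := NF_toWord_of_mem_H hh y (mem_head?_mem hy)
        exact fun hc => hy1 hc.symm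
      have hcnt : noneCount (xg α).toWord = ds.length * noneCount core := by
        rw [hx, hword, noneCount_append, hgc]
        have : noneCount h.toWord = 0 := (noneCount_eq_zero_iff _).2 (NF_toWord_of_mem_H hh)
        simp [this]
      rw [xg_toWord] at hcnt
      have hx1 : noneCount [((none : Option α), true)] = 1 := by simp [noneCount]
      rw [hx1] at hcnt
      have hd1 : 1 ≤ ds.length := by
        cases hds' : ds with
        | nil => exact absurd hds' hdsne
        | cons a t => simp [hds']
      rw [hccnt] at hcnt
      nlinarith [hcnt, h2, hd1]

theorem inverted_generating_form {g : FreeGroup (Option α)} (hg : rhom α g = g⁻¹)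
    (hgen : xg α ∈ Subgroup.closure ((Hsub α : Set (FreeGroup (Option α))) ∪ {g})) :
    ∃ a ∈ Hsub α, g = a * xg α * a⁻¹ ∨ g = a * (xg α)⁻¹ * a⁻¹ := by
  have hcnt := noneCount_one_of_generating hg hgen
  obtain ⟨C, k, hdec, hcount⟩ := antipalindrome_decomp hg
  rw [hcnt] at hcount
  have hk : k.natAbs = 1 ∧ noneCount C = 0 := by omega
  have hCH : FreeGroup.mk C ∈ Hsub α := mem_H_of_NF ((noneCount_eq_zero_iff _).1 hk.2)
  have hfix : rhom α (FreeGroup.mk C) = FreeGroup.mk C := rhom_fixes_H hCH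
  refine ⟨FreeGroup.mk C, hCH, ?_⟩
  rw [hfix] at hdec
  rcases Int.natAbs_eq k with hk' | hk'
  · left
    rw [hdec, hk.1] at *
    rw [show k = 1 by omega]
    simp
  · right
    rw [hdec]
    rw [show k = -1 by omega]
    simp [zpow_neg]

section Center

variable {β : Type*} [DecidableEq β]

theorem toWord_of_mul_of_ne {p q : β} (h : p ≠ q) :
    (FreeGroup.of p * FreeGroup.of q).toWord = [(p, true), (q, true)] := by
  have := toWord_mul_of_seam (g := FreeGroup.of p) (w := FreeGroup.of q) (by
    intro a ha b hb
    rw [FreeGroup.toWord_of] at ha hb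
    have ha' : a = (p, true) := by have := ha; simp at this; exact this.symm
    have hb' : b = (q, true) := by have := hb; simp at this; exact this.symm
    subst ha'; subst hb'
    exact fun hc => h hc.1)
  rw [this, FreeGroup.toWord_of, FreeGroup.toWord_of]
  rfl

theorem of_mul_of_ne_comm {p q : β} (h : p ≠ q) :
    FreeGroup.of p * FreeGroup.of q ≠ FreeGroup.of q * FreeGroup.of p := by
  intro hc
  have h1 := toWord_of_mul_of_ne h
  have h2 := toWord_of_mul_of_ne h.symm
  rw [hc, h2] at h1
  have h3 : ((q, true) : β × Bool) = (p, true) := List.head_eq_of_cons_eq h1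
  exact h (congrArg Prod.fst h3).symm

theorem eq_one_of_commute_all [Infinite β] {z : FreeGroup β}
    (hz : ∀ p : β, z * FreeGroup.of p = FreeGroup.of p * z) : z = 1 := by
  set L := z.toWord with hL
  obtain ⟨p, hp⟩ := Infinite.exists_notMem_finset (L.map Prod.fst).toFinset
  have hpL : ∀ l ∈ L, l.1 ≠ p := by
    intro l hl hc
    exact hp (List.mem_toFinset.2 (List.mem_map.2 ⟨l, hl, hc⟩))
  have hRight : (z * FreeGroup.of p).toWord = L ++ [(p, true)] := by
    have := toWord_mul_of_seam (g := z) (w := FreeGroup.of p) (by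
      intro a ha b hb
      rw [FreeGroup.toWord_of] at hb
      have hb' : b = (p, true) := by have := hb; simp at this; exact this.symm
      subst hb'
      exact fun hc => hpL a (mem_getLast?_mem ha) hc.1)
    rw [this, FreeGroup.toWord_of]
  have hLeft : (FreeGroup.of p * z).toWord = (p, true) :: L := by
    have := toWord_mul_of_seam (g := FreeGroup.of p) (w := z) (by
      intro a ha b hb
      rw [FreeGroup.toWord_of] at ha
      have ha' : a = (p, true) := by have := ha; simp at this; exact this.symm
      subst ha'
      intro hc
      exact hpL b (mem_head?_mem hb) hc.1.symm)
    rw [this, FreeGroup.toWord_of]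
    rfl
  have heq : (p, true) :: L = L ++ [(p, true)] := by
    rw [← hLeft, ← hRight, hz p]
  cases hLnil : L with
  | nil => exact FreeGroup.toWord_eq_nil_iff.1 (by rw [← hL, hLnil])
  | cons a t =>
    exfalso
    rw [hLnil] at heq
    have : a = (p, true) := (List.head_eq_of_cons_eq (by simpa using heq)).symm
    exact hpL a (by rw [hLnil]; exact List.mem_cons_self) (by rw [this])

end Center


end CEI


/-- Let `φ ∈ Aut F` be an extremal involution with canonical basis `{x} ⊔ U`. If
`s ∈ Out F` commutes with `φ̂`, then `s` is induced by some `σ ∈ Aut F` such that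
`σx = x^{±1}` and `σ⟨U⟩ = ⟨U⟩`. -/
theorem commuting_with_extremal_involution (X : Type*) [Infinite X]
    (φ : MulAut (FreeGroup X)) (hφ : IsInvolution φ)
    (x : FreeGroup X) (U : Set (FreeGroup X)) (hxU : x ∉ U)
    (hbasis : FreeGroup.IsBasis ({x} ∪ U))
    (hx : φ x = x⁻¹) (hU : ∀ u ∈ U, φ u = u)
    (s : OutAut (FreeGroup X)) (hs : s * toOut φ = toOut φ * s) :
    ∃ σ : MulAut (FreeGroup X), toOut σ = s ∧ (σ x = x ∨ σ x = x⁻¹) ∧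
      Subgroup.map σ.toMonoidHom (Subgroup.closure U) = Subgroup.closure U := by
  classical
  -- the basis isomorphism
  let j : FreeGroup ↥({x} ∪ U) ≃* FreeGroup X :=
    MulEquiv.ofBijective (FreeGroup.lift (fun s : ↥({x} ∪ U) => (s : FreeGroup X))) hbasis
  let e : Option ↥U ≃ ↥({x} ∪ U) :=
    { toFun := fun o => o.elim ⟨x, Or.inl rfl⟩ (fun u => ⟨u, Or.inr u.2⟩)
      invFun := fun t => if h : (t : FreeGroup X) ∈ U then some ⟨t, h⟩ else none
      left_inv := by
        intro o
        cases o with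
        | none => simp [hxU]
        | some u => simp
      right_inv := by
        intro t
        by_cases h : (t : FreeGroup X) ∈ U
        · simp [h]; rfl
        · rcases t.2 with h' | h'
          · rw [Set.mem_singleton_iff] at h'
            simp only [dif_neg h]
            exact Subtype.ext h'.symm
          · exact absurd h' h }
  let J : FreeGroup (Option ↥U) ≃* FreeGroup X := (FreeGroup.freeGroupCongr e).trans j
  have hJof : ∀ o : Option ↥U, J (FreeGroup.of o) = ((e o : ↥({x} ∪ U)) : FreeGroup X) := by
    intro o
    show j ((FreeGroup.freeGroupCongr e) (FreeGroup.of o)) = _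
    rw [show (FreeGroup.freeGroupCongr e) (FreeGroup.of o) = FreeGroup.of (e o) from
      FreeGroup.map.of]
    exact FreeGroup.lift_apply_of
  have hJx : J (CEI.xg ↥U) = x := hJof none
  have hJu : ∀ u : ↥U, J (FreeGroup.of (some u)) = (u : FreeGroup X) := fun u => hJof (some u)
  -- φ corresponds to rhom under J
  have hcomm : ∀ g, φ (J g) = J (CEI.rhom ↥U g) := by
    have hhom : ((φ : MulAut (FreeGroup X)).toMonoidHom.comp J.toMonoidHom) =
        (J.toMonoidHom.comp (CEI.rhom ↥U)) := by
      apply FreeGroup.ext_hom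
      intro a
      cases a with
      | none =>
        simp only [MonoidHom.comp_apply, MulEquiv.coe_toMonoidHom]
        rw [show (FreeGroup.of (none : Option ↥U)) = CEI.xg ↥U from rfl, hJx, hx]
        rw [show CEI.rhom ↥U (CEI.xg ↥U) = (CEI.xg ↥U)⁻¹ from CEI.rhom_x, map_inv, hJx]
      | some u =>
        simp only [MonoidHom.comp_apply, MulEquiv.coe_toMonoidHom]
        rw [CEI.rhom_some, hJu, hU u u.2]
    intro g
    exact DFunLike.congr_fun hhom g
  have hcomm' : ∀ w : FreeGroup X, φ w = J (CEI.rhom ↥U (J.symm w)) := by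
    intro w
    conv_lhs => rw [← J.apply_symm_apply w]
    exact hcomm (J.symm w)
  -- subgroup correspondence
  have hHmap : Subgroup.map J.toMonoidHom (CEI.Hsub ↥U) = Subgroup.closure U := by
    rw [CEI.Hsub, MonoidHom.map_closure]
    congr 1
    ext z
    constructor
    · rintro ⟨-, ⟨u, rfl⟩, rfl⟩
      rw [MulEquiv.coe_toMonoidHom, hJu]
      exact u.2
    · intro hz
      exact ⟨FreeGroup.of (some ⟨z, hz⟩), ⟨⟨z, hz⟩, rfl⟩, by rw [MulEquiv.coe_toMonoidHom, hJu]⟩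
  have hHiff : ∀ g, g ∈ CEI.Hsub ↥U ↔ J g ∈ Subgroup.closure U := by
    intro g
    rw [← hHmap]
    constructor
    · intro hg; exact ⟨g, hg, rfl⟩
    · rintro ⟨g', hg', hg⟩
      have : g' = g := J.injective hg
      rwa [← this]
  -- Fix φ = closure U
  have hfixiff : ∀ w : FreeGroup X, φ w = w ↔ w ∈ Subgroup.closure U := by
    intro w
    rw [hcomm' w]
    constructor
    · intro h
      have : CEI.rhom ↥U (J.symm w) = J.symm w := by
        apply J.injective
        rw [h, J.apply_symm_apply]
      have := CEI.rhom_eq_self_iff.1 this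
      rw [hHiff] at this
      rwa [J.apply_symm_apply] at this
    · intro h
      have h1 : J.symm w ∈ CEI.Hsub ↥U := by
        rw [hHiff, J.apply_symm_apply]; exact h
      rw [CEI.rhom_fixes_H h1, J.apply_symm_apply]
  -- group-theoretic setup in Out
  obtain ⟨τ, hτ₀⟩ := QuotientGroup.mk'_surjective (Inn (FreeGroup X)) s
  have hτ : toOut τ = s := hτ₀
  have hφ2 : φ * φ = 1 := by
    have := hφ.2
    rwa [sq] at this
  have hker : toOut (τ * φ * τ⁻¹ * φ⁻¹) = 1 := by
    have hsφ : s * toOut φ * s⁻¹ * (toOut φ)⁻¹ = 1 := by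
      rw [hs]
      group
    rw [map_mul, map_mul, map_mul, map_inv, map_inv]
    rw [hτ]
    exact hsφ
  have hmem : τ * φ * τ⁻¹ * φ⁻¹ ∈ Inn (FreeGroup X) := by
    have hker' : QuotientGroup.mk' (Inn (FreeGroup X)) (τ * φ * τ⁻¹ * φ⁻¹) = 1 := hker
    rw [QuotientGroup.mk'_apply, QuotientGroup.eq_one_iff] at hker'
    exact hker'
  obtain ⟨u, hu⟩ := hmem
  have hconj : τ * φ * τ⁻¹ = MulAut.conj u * φ := by
    have : τ * φ * τ⁻¹ * φ⁻¹ * φ = MulAut.conj u * φ := by rw [hu]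
    rwa [inv_mul_cancel_right] at this
  -- u * φ u is central
  have hcentral : ∀ y : FreeGroup X, (u * φ u) * y = y * (u * φ u) := by
    have hsq : (MulAut.conj u * φ) * (MulAut.conj u * φ) = 1 := by
      rw [← hconj]
      have h1 : τ * φ * τ⁻¹ * (τ * φ * τ⁻¹) = τ * (φ * φ) * τ⁻¹ := by group
      rw [h1, hφ2]
      group
    intro y
    have happ := DFunLike.congr_fun hsq y
    simp only [MulAut.mul_apply, MulAut.conj_apply, MulAut.one_apply] at happ
    have hφφ : φ (φ y) = y := by
      have := DFunLike.congr_fun hφ2 y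
      simpa [MulAut.mul_apply] using this
    have key : (u * φ u) * y * (u * φ u)⁻¹ = y := by
      have e1 : (u * φ u) * y * (u * φ u)⁻¹ = u * φ (u * φ y * u⁻¹) * u⁻¹ := by
        rw [map_mul, map_mul, map_inv, hφφ]
        group
      rw [e1]
      exact happ
    calc (u * φ u) * y = ((u * φ u) * y * (u * φ u)⁻¹) * (u * φ u) := by group
    _ = y * (u * φ u) := by rw [key]
  have hzc : u * φ u = 1 := by
    apply CEI.eq_one_of_commute_all (β := X)
    intro p
    exact hcentral (FreeGroup.of p)
  have hφu : φ u = u⁻¹ := by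
    have : φ u = u⁻¹ * (u * φ u) := by group
    rw [hzc] at this
    simpa using this
  -- U is nonempty
  have htop : Subgroup.closure ({x} ∪ U) = ⊤ := by
    have h1 : (FreeGroup.lift (fun s : ↥({x} ∪ U) => (s : FreeGroup X))).range = ⊤ :=
      MonoidHom.range_eq_top_of_surjective _ hbasis.2
    rw [FreeGroup.range_lift_eq_closure] at h1
    rwa [show Set.range (fun s : ↥({x} ∪ U) => (s : FreeGroup X)) = ({x} ∪ U) from
      Subtype.range_coe] at h1
  have hUne : U.Nonempty := by
    by_contra hUe
    rw [Set.not_nonempty_iff_eq_empty] at hUe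
    subst hUe
    rw [Set.union_empty] at htop
    obtain ⟨p, q, hpq⟩ := Nontrivial.exists_pair_ne (α := X)
    have hp : FreeGroup.of p ∈ Subgroup.closure {x} := by rw [htop]; trivial
    have hq : FreeGroup.of q ∈ Subgroup.closure {x} := by rw [htop]; trivial
    obtain ⟨mp, hmp⟩ := Subgroup.mem_closure_singleton.1 hp
    obtain ⟨mq, hmq⟩ := Subgroup.mem_closure_singleton.1 hq
    exact CEI.of_mul_of_ne_comm hpq
      (by rw [← hmp, ← hmq]; exact ((Commute.refl x).zpow_zpow mp mq).eq)
  obtain ⟨y₀v, hy₀v⟩ := hUne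
  let y₀ : ↥U := ⟨y₀v, hy₀v⟩
  -- φ fixes closure U pointwise
  have hφfix : ∀ w ∈ Subgroup.closure U, φ w = w := by
    intro w hw
    exact (hfixiff w).2 hw
  -- the witness w := τ y₀
  have hwne : τ (y₀ : FreeGroup X) ≠ 1 := by
    intro hc
    have h1 : (y₀ : FreeGroup X) = 1 := by
      have := congrArg τ.symm hc
      simpa using this
    have h2 : J (FreeGroup.of (some y₀)) = 1 := by rw [hJu]; exact h1
    have h3 : FreeGroup.of (some y₀) = (1 : FreeGroup (Option ↥U)) := by
      apply J.injective
      simpa using h2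
    exact FreeGroup.of_ne_one _ h3
  have hwrel : u * φ (τ (y₀ : FreeGroup X)) * u⁻¹ = τ (y₀ : FreeGroup X) := by
    have h1 := DFunLike.congr_fun hconj (τ (y₀ : FreeGroup X))
    simp only [MulAut.mul_apply, MulAut.conj_apply] at h1
    have h2 : τ⁻¹ (τ (y₀ : FreeGroup X)) = (y₀ : FreeGroup X) := by
      rw [MulAut.inv_def]
      exact τ.symm_apply_apply _
    rw [h2, hU _ y₀.2] at h1
    exact h1.symm
  -- transport to the model
  set u' := J.symm u with hu'def
  have hJu' : J u' = u := J.apply_symm_apply u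
  have hu'inv : CEI.rhom ↥U u' = u'⁻¹ := by
    apply J.injective
    rw [← hcomm, hJu', hφu, map_inv, hJu']
  obtain ⟨C, k, hCdec, -⟩ := CEI.antipalindrome_decomp hu'inv
  set c := FreeGroup.mk C with hcdef
  -- k is even
  have hkeven : ¬ Odd k := by
    intro hodd
    set w' := J.symm (τ (y₀ : FreeGroup X)) with hw'def
    have hw'ne : w' ≠ 1 := by
      intro hc
      apply hwne
      have := congrArg J hc
      rwa [J.apply_symm_apply, map_one] at this
    have hJw' : J w' = τ (y₀ : FreeGroup X) := J.apply_symm_apply _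
    have hrel' : u' * CEI.rhom ↥U w' * u'⁻¹ = w' := by
      apply J.injective
      rw [map_mul, map_mul, map_inv, hJu', ← hcomm, hJw']
      exact hwrel
    have hfrag : CEI.xg ↥U ^ k * (CEI.rhom ↥U c)⁻¹ = c⁻¹ * u' := by
      rw [hCdec]; group
    have hfrag2 : CEI.rhom ↥U c * CEI.xg ↥U ^ (-k) = u'⁻¹ * c := by
      have := congrArg (fun z => z⁻¹) hfrag
      simpa [mul_inv_rev, zpow_neg, mul_assoc] using this
    have hg0 : CEI.xg ↥U ^ k * CEI.rhom ↥U (c⁻¹ * w' * c) * CEI.xg ↥U ^ (-k) =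
        c⁻¹ * w' * c := by
      rw [map_mul, map_mul, map_inv]
      calc CEI.xg ↥U ^ k * ((CEI.rhom ↥U c)⁻¹ * CEI.rhom ↥U w' * CEI.rhom ↥U c) * CEI.xg ↥U ^ (-k)
          = (CEI.xg ↥U ^ k * (CEI.rhom ↥U c)⁻¹) * CEI.rhom ↥U w' *
            (CEI.rhom ↥U c * CEI.xg ↥U ^ (-k)) := by group
      _ = (c⁻¹ * u') * CEI.rhom ↥U w' * (u'⁻¹ * c) := by rw [hfrag, hfrag2]
      _ = c⁻¹ * (u' * CEI.rhom ↥U w' * u'⁻¹) * c := by group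
      _ = c⁻¹ * w' * c := by rw [hrel']
    have := CEI.odd_conj_fix hodd hg0
    apply hw'ne
    have h1 : w' = c * 1 * c⁻¹ := by
      rw [← this]; group
    rw [h1]; group
  have hkev : Even k := Int.not_odd_iff_even.1 hkeven
  obtain ⟨j0, hj0⟩ := hkev
  set v := c * CEI.xg ↥U ^ j0 with hvdef
  have hvu : u' = v * (CEI.rhom ↥U v)⁻¹ := by
    rw [hvdef, map_mul, CEI.rhom_zpow_x, mul_inv_rev, zpow_neg, inv_inv]
    calc u' = c * CEI.xg ↥U ^ k * (CEI.rhom ↥U c)⁻¹ := hCdec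
    _ = c * CEI.xg ↥U ^ (j0 + j0) * (CEI.rhom ↥U c)⁻¹ := by rw [← hj0]
    _ = c * CEI.xg ↥U ^ j0 * (CEI.xg ↥U ^ j0 * (CEI.rhom ↥U c)⁻¹) := by
        rw [zpow_add]; group
  set V := J v with hVdef
  have huV : u = V * (φ V)⁻¹ := by
    rw [hVdef, ← hJu', hvu, map_mul, map_inv, ← hcomm]
  -- build σ₀
  set σ₀ : MulAut (FreeGroup X) := (MulAut.conj V)⁻¹ * τ with hσ₀def
  have houtconj : ∀ z : FreeGroup X, toOut (MulAut.conj z) = 1 := by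
    intro z
    have : QuotientGroup.mk' (Inn (FreeGroup X)) (MulAut.conj z) = 1 := by
      rw [QuotientGroup.mk'_apply, QuotientGroup.eq_one_iff]
      exact ⟨z, rfl⟩
    exact this
  have hσ₀out : toOut σ₀ = s := by
    rw [hσ₀def, map_mul, map_inv, houtconj, hτ]
    group
  have hconjlem : ∀ (ψ : MulAut (FreeGroup X)) (a : FreeGroup X),
      ψ * MulAut.conj a = MulAut.conj (ψ a) * ψ := by
    intro ψ a
    ext y
    simp only [MulAut.mul_apply, MulAut.conj_apply, map_mul, map_inv]
  have hiV : V⁻¹ * u = φ V⁻¹ := by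
    rw [huV, map_inv]
    group
  have hσ₀comm : σ₀ * φ = φ * σ₀ := by
    rw [hσ₀def]
    have hc1 : (MulAut.conj V)⁻¹ = MulAut.conj V⁻¹ := (map_inv MulAut.conj V).symm
    have h1 : τ * φ = MulAut.conj u * φ * τ := by
      rw [← hconj]; group
    calc (MulAut.conj V)⁻¹ * τ * φ = MulAut.conj V⁻¹ * (τ * φ) := by rw [hc1, mul_assoc]
    _ = MulAut.conj V⁻¹ * (MulAut.conj u * φ * τ) := by rw [h1]
    _ = MulAut.conj (V⁻¹ * u) * (φ * τ) := by rw [map_mul]; group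
    _ = MulAut.conj (φ V⁻¹) * φ * τ := by rw [hiV]; group
    _ = (φ * MulAut.conj V⁻¹) * τ := by rw [hconjlem φ V⁻¹]
    _ = φ * ((MulAut.conj V)⁻¹ * τ) := by rw [hc1]; group
  have hσ₀φ : ∀ y : FreeGroup X, σ₀ (φ y) = φ (σ₀ y) := by
    intro y
    have := DFunLike.congr_fun hσ₀comm y
    simpa [MulAut.mul_apply] using this
  have hσ₀U : ∀ w ∈ Subgroup.closure U, σ₀ w ∈ Subgroup.closure U := by
    intro w hw
    rw [← hfixiff]
    calc φ (σ₀ w) = σ₀ (φ w) := (hσ₀φ w).symm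
    _ = σ₀ w := by rw [hφfix w hw]
  have hσ₀Uinv : ∀ w ∈ Subgroup.closure U, σ₀⁻¹ w ∈ Subgroup.closure U := by
    intro w hw
    rw [← hfixiff]
    have hss : σ₀ (σ₀⁻¹ w) = w := by
      rw [MulAut.inv_def]
      exact σ₀.apply_symm_apply w
    have h1 : σ₀ (φ (σ₀⁻¹ w)) = φ w := by
      rw [hσ₀φ (σ₀⁻¹ w), hss]
    calc φ (σ₀⁻¹ w) = σ₀⁻¹ (σ₀ (φ (σ₀⁻¹ w))) := by
          rw [MulAut.inv_def, σ₀.symm_apply_apply]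
    _ = σ₀⁻¹ (φ w) := by rw [h1]
    _ = σ₀⁻¹ w := by rw [hφfix w hw]
  -- σ₀ x is inverted by φ
  have hAinv : φ (σ₀ x) = (σ₀ x)⁻¹ := by
    calc φ (σ₀ x) = σ₀ (φ x) := (hσ₀φ x).symm
    _ = σ₀ x⁻¹ := by rw [hx]
    _ = (σ₀ x)⁻¹ := map_inv σ₀ x
  set A' := J.symm (σ₀ x) with hA'def
  have hJA' : J A' = σ₀ x := J.apply_symm_apply _
  have hA'inv : CEI.rhom ↥U A' = A'⁻¹ := by
    apply J.injective
    rw [← hcomm, hJA', hAinv, map_inv, hJA']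
  -- generation
  have hgenX : x ∈ Subgroup.closure ({σ₀ x} ∪ (Subgroup.closure U : Set (FreeGroup X))) := by
    have h1 : Subgroup.map σ₀.toMonoidHom (Subgroup.closure ({x} ∪ U)) = ⊤ := by
      rw [htop]
      exact Subgroup.map_top_of_surjective _ σ₀.surjective
    rw [MonoidHom.map_closure] at h1
    have h2 : (σ₀.toMonoidHom '' ({x} ∪ U)) ⊆
        ({σ₀ x} ∪ (Subgroup.closure U : Set (FreeGroup X))) := by
      rintro z ⟨w, hw, rfl⟩
      rcases hw with hw | hw
      · rw [Set.mem_singleton_iff] at hw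
        subst hw
        exact Or.inl rfl
      · right
        exact SetLike.mem_coe.2 (hσ₀U w (Subgroup.subset_closure hw))
    have h3 : (⊤ : Subgroup (FreeGroup X)) ≤
        Subgroup.closure ({σ₀ x} ∪ (Subgroup.closure U : Set (FreeGroup X))) := by
      rw [← h1]
      exact (Subgroup.closure_mono h2).trans_eq rfl
    exact h3 (Subgroup.mem_top x)
  have hHset : (J.toMonoidHom '' (CEI.Hsub ↥U : Set (FreeGroup (Option ↥U)))) =
      (Subgroup.closure U : Set (FreeGroup X)) := by
    rw [← Subgroup.coe_map, hHmap]
  have hgenO : CEI.xg ↥U ∈ Subgroup.closure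
      ((CEI.Hsub ↥U : Set (FreeGroup (Option ↥U))) ∪ {A'}) := by
    have h1 : Subgroup.map J.toMonoidHom
        (Subgroup.closure ((CEI.Hsub ↥U : Set (FreeGroup (Option ↥U))) ∪ {A'})) =
        Subgroup.closure ({σ₀ x} ∪ (Subgroup.closure U : Set (FreeGroup X))) := by
      rw [MonoidHom.map_closure]
      congr 1
      rw [Set.image_union, Set.image_singleton, hHset]
      rw [show J.toMonoidHom A' = σ₀ x from hJA']
      exact Set.union_comm _ _
    have h2 : J (CEI.xg ↥U) ∈ Subgroup.map J.toMonoidHom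
        (Subgroup.closure ((CEI.Hsub ↥U : Set (FreeGroup (Option ↥U))) ∪ {A'})) := by
      rw [h1, hJx]
      exact hgenX
    obtain ⟨g1, hg1, hg1e⟩ := h2
    have : g1 = CEI.xg ↥U := J.injective hg1e
    rwa [← this]
  obtain ⟨a, haH, hform⟩ := CEI.inverted_generating_form hA'inv hgenO
  set aX := J a with haXdef
  have haXU : aX ∈ Subgroup.closure U := (hHiff a).1 haH
  set σ : MulAut (FreeGroup X) := (MulAut.conj aX)⁻¹ * σ₀ with hσdef
  have hσapp : ∀ z : FreeGroup X, σ z = aX⁻¹ * σ₀ z * aX := by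
    intro z
    rw [hσdef]
    have hc1 : (MulAut.conj aX)⁻¹ = MulAut.conj aX⁻¹ := (map_inv MulAut.conj aX).symm
    rw [hc1]
    simp [MulAut.mul_apply, MulAut.conj_apply]
  refine ⟨σ, ?_, ?_, ?_⟩
  · rw [hσdef, map_mul, map_inv, houtconj, hσ₀out]
    group
  · have hσ₀x : σ₀ x = J (a * CEI.xg ↥U * a⁻¹) ∨ σ₀ x = J (a * (CEI.xg ↥U)⁻¹ * a⁻¹) := by
      rcases hform with h | h
      · left; rw [← hJA', h]
      · right; rw [← hJA', h]
    rcases hσ₀x with h | h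
    · left
      rw [hσapp, h, map_mul, map_mul, map_inv, hJx, ← haXdef]
      group
    · right
      rw [hσapp, h, map_mul, map_mul, map_inv, map_inv, hJx, ← haXdef]
      group
  · apply le_antisymm
    · rintro w ⟨z, hz, rfl⟩
      show σ z ∈ Subgroup.closure U
      rw [hσapp]
      exact mul_mem (mul_mem (inv_mem haXU) (hσ₀U z hz)) haXU
    · intro w hw
      refine ⟨σ⁻¹ w, ?_, ?_⟩
      · have hσinv : σ⁻¹ w = σ₀⁻¹ (aX * w * aX⁻¹) := by
          rw [hσdef, mul_inv_rev, inv_inv]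
          simp [MulAut.mul_apply, MulAut.conj_apply]
        rw [hσinv]
        exact hσ₀Uinv _ (mul_mem (mul_mem haXU hw) (inv_mem haXU))
      · show σ (σ⁻¹ w) = w
        rw [MulAut.inv_def]
        exact σ.apply_symm_apply w
end
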